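/- arXiv:math/0207242 — 8 statements merged into one kernel-verified Lean document; each statement's English description precedes it below -/
import Mathlib

section
/- For every h ∈ E, the gradient ∇G(h) lies in the set { m ∈ E : S(m) > −∞ }; that is, every point of the form ∇G(h) has finite mean-field entropy. -/
open MeasureTheory

set_option maxHeartbeats 1000000
set_option synthInstance.maxHeartbeats 200000

/-- For every `h ∈ E`, the gradient `∇G h` has finite mean-field
entropy, i.e. `∇G h ∈ {m : S m > −∞}`, where
`S m = inf_h { G h − ⟪m, h⟫ }` (an `EReal`-valued infimum). -/
theorem stmt_2
    {E : Type*} [NormedAddCommGroup E] [InnerProductSpace ℝ E]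
    [FiniteDimensional ℝ E] [MeasurableSpace E] [BorelSpace E]
    [CompleteSpace E]
    (μ : Measure E) [IsProbabilityMeasure μ]
    (Ω : Set E) (hΩ : IsCompact Ω) (hsupp : μ Ωᶜ = 0)
    (G : E → ℝ)
    (hG : ∀ h : E, G h = Real.log (∫ x, Real.exp (inner ℝ x h : ℝ) ∂μ))
    (S : E → EReal)
    (hS : ∀ m : E, S m = ⨅ h : E, ((G h - inner ℝ m h : ℝ) : EReal)) :
    ∀ h : E, gradient G h ∈ {m : E | ⊥ < S m} := by
  intro h
  -- basic setup
  obtain ⟨R, hR0, hRΩ⟩ : ∃ R : ℝ, 0 ≤ R ∧ Ω ⊆ Metric.closedBall 0 R := by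
    obtain ⟨r, hr⟩ := hΩ.isBounded.subset_closedBall 0
    exact ⟨max r 0, le_max_right _ _,
      hr.trans (Metric.closedBall_subset_closedBall (le_max_left _ _))⟩
  have hae : ∀ᵐ x ∂μ, x ∈ Ω := by
    rw [MeasureTheory.ae_iff]
    simpa [Set.compl_def] using hsupp
  have hnorm : ∀ᵐ x ∂μ, ‖x‖ ≤ R := by
    filter_upwards [hae] with x hx
    simpa using mem_closedBall_zero_iff.1 (hRΩ hx)
  have cont : ∀ k : E, Continuous fun x : E => Real.exp (inner ℝ x k : ℝ) :=
    fun k => Real.continuous_exp.comp (continuous_id.inner continuous_const)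
  have hinner_le : ∀ (k x : E), ‖x‖ ≤ R → (inner ℝ x k : ℝ) ≤ R * ‖k‖ := fun k x hx =>
    (real_inner_le_norm x k).trans (mul_le_mul_of_nonneg_right hx (norm_nonneg k))
  have hinner_ge : ∀ (k x : E), ‖x‖ ≤ R → -(R * ‖k‖) ≤ (inner ℝ x k : ℝ) := by
    intro k x hx
    have : (inner ℝ (-x) k : ℝ) ≤ R * ‖k‖ := by
      have := hinner_le k (-x) (by simpa using hx)
      simpa using this
    rw [inner_neg_left] at this
    linarith
  have intgr : ∀ (f : E → ℝ) (C : ℝ), Continuous f → (∀ᵐ x ∂μ, ‖f x‖ ≤ C) →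
      Integrable f μ := fun f C hc hb =>
    (integrable_const C).mono' hc.aestronglyMeasurable hb
  have int_exp : ∀ k : E, Integrable (fun x => Real.exp (inner ℝ x k : ℝ)) μ := by
    intro k
    refine intgr _ (Real.exp (R * ‖k‖)) (cont k) ?_
    filter_upwards [hnorm] with x hx
    rw [Real.norm_eq_abs, abs_of_pos (Real.exp_pos _)]
    exact Real.exp_le_exp.2 (hinner_le k x hx)
  have int_smul : Integrable (fun x => Real.exp (inner ℝ x h : ℝ) • x) μ := by
    refine (integrable_const (Real.exp (R * ‖h‖) * R)).mono'
      ((cont h).smul continuous_id).aestronglyMeasurable ?_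
    filter_upwards [hnorm] with x hx
    rw [norm_smul, Real.norm_eq_abs, abs_of_pos (Real.exp_pos _)]
    exact mul_le_mul (Real.exp_le_exp.2 (hinner_le h x hx)) hx (norm_nonneg x)
      (Real.exp_pos _).le
  have Fpos : ∀ k : E, 0 < ∫ x, Real.exp (inner ℝ x k : ℝ) ∂μ := by
    intro k
    have hle : ∫ x, Real.exp (-(R * ‖k‖)) ∂μ ≤ ∫ x, Real.exp (inner ℝ x k : ℝ) ∂μ := by
      refine integral_mono_ae (integrable_const _) (int_exp k) ?_
      filter_upwards [hnorm] with x hx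
      exact Real.exp_le_exp.2 (hinner_ge k x hx)
    have : (Real.exp (-(R * ‖k‖))) ≤ ∫ x, Real.exp (inner ℝ x k : ℝ) ∂μ := by
      simpa [measure_univ] using hle
    exact lt_of_lt_of_le (Real.exp_pos _) this
  set Fh : ℝ := ∫ x, Real.exp (inner ℝ x h : ℝ) ∂μ with hFh
  set I : E := ∫ x, Real.exp (inner ℝ x h : ℝ) • x ∂μ with hI
  set m : E := Fh⁻¹ • I with hm
  -- the inner ℝ products against m
  have hIv : ∀ v : E, (inner ℝ I v : ℝ) = ∫ x, Real.exp (inner ℝ x h : ℝ) * (inner ℝ x v : ℝ) ∂μ := by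
    intro v
    rw [real_inner_comm, ← integral_inner int_smul v]
    congr 1
    funext x
    rw [real_inner_smul_right, real_inner_comm v x]
  have hmv : ∀ v : E, (inner ℝ m v : ℝ) =
      Fh⁻¹ * ∫ x, Real.exp (inner ℝ x h : ℝ) * (inner ℝ x v : ℝ) ∂μ := by
    intro v
    rw [hm, real_inner_smul_left, hIv]
  -- Step A: derivative of the moment generating function
  have hFderiv : HasFDerivAt (fun k : E => ∫ x, Real.exp (inner ℝ x k : ℝ) ∂μ)
      (∫ x, Real.exp (inner ℝ x h : ℝ) • (innerSL ℝ x : E →L[ℝ] ℝ) ∂μ) h := by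
    refine hasFDerivAt_integral_of_dominated_of_fderiv_le
      (F' := fun (k : E) (x : E) => Real.exp (inner ℝ x k : ℝ) • (innerSL ℝ x : E →L[ℝ] ℝ))
      (bound := fun _ => R * Real.exp (R * (‖h‖ + 1))) (Metric.ball_mem_nhds h one_pos)
      (Filter.Eventually.of_forall fun k => (cont k).aestronglyMeasurable)
      (int_exp h) ?_ ?_ (integrable_const _) ?_
    · exact (((cont h).smul (innerSL ℝ : E →L[ℝ] E →L[ℝ] ℝ).continuous)).aestronglyMeasurable
    · filter_upwards [hnorm] with x hx
      intro k hk
      have hknorm : ‖k‖ ≤ ‖h‖ + 1 := by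
        have hd : ‖k - h‖ < 1 := by
          rw [← dist_eq_norm]; exact Metric.mem_ball.1 hk
        have h2 : ‖k‖ ≤ ‖h‖ + ‖k - h‖ := by
          have h3 := norm_add_le h (k - h)
          rwa [show h + (k - h) = k by abel] at h3
        linarith
      rw [norm_smul (Real.exp (inner ℝ x k : ℝ)) ((innerSL ℝ) x : E →L[ℝ] ℝ),
        Real.norm_eq_abs, abs_of_pos (Real.exp_pos _), innerSL_apply_norm]
      have hexp : Real.exp (inner ℝ x k : ℝ) ≤ Real.exp (R * (‖h‖ + 1)) :=
        Real.exp_le_exp.2 ((hinner_le k x hx).trans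
          (mul_le_mul_of_nonneg_left hknorm hR0))
      calc Real.exp (inner ℝ x k : ℝ) * ‖x‖ ≤ Real.exp (R * (‖h‖ + 1)) * R :=
            mul_le_mul hexp hx (norm_nonneg x) (Real.exp_pos _).le
        _ = R * Real.exp (R * (‖h‖ + 1)) := mul_comm _ _
    · refine Filter.Eventually.of_forall fun x => fun k _ => ?_
      exact (Real.hasDerivAt_exp _).comp_hasFDerivAt k (innerSL ℝ x).hasFDerivAt
  -- identify the derivative
  have hint_eq : (∫ x, Real.exp (inner ℝ x h : ℝ) • (innerSL ℝ x : E →L[ℝ] ℝ) ∂μ)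
      = innerSL ℝ I := by
    have : (fun x : E => Real.exp (inner ℝ x h : ℝ) • (innerSL ℝ x : E →L[ℝ] ℝ))
        = fun x : E => innerSL ℝ (Real.exp (inner ℝ x h : ℝ) • x) := by
      funext x
      simp [real_inner_smul_left]
    rw [this, hI, (innerSL ℝ : E →L[ℝ] E →L[ℝ] ℝ).integral_comp_comm int_smul]
  -- Step B: gradient of G
  have hGfun : G = fun k : E => Real.log (∫ x, Real.exp (inner ℝ x k : ℝ) ∂μ) := funext hG
  have hGgrad : HasGradientAt G m h := by
    rw [hasGradientAt_iff_hasFDerivAt, hGfun]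
    have hlog := hFderiv.log (ne_of_gt (Fpos h))
    rw [hint_eq] at hlog
    convert hlog using 1
    · rfl
    ext u
    simp [InnerProductSpace.toDual_apply_apply, hm, real_inner_smul_left]
    exact Or.inl rfl
  have hgrad : gradient G h = m := hGgrad.gradient
  -- Step C: the convexity-type lower bound
  have key : ∀ k : E, G h + (inner ℝ m (k - h) : ℝ) ≤ G k := by
    intro k
    set v : E := k - h with hv
    set c : ℝ := (inner ℝ m v : ℝ) with hc
    have hIvc : ∫ x, Real.exp (inner ℝ x h : ℝ) * (inner ℝ x v : ℝ) ∂μ = Fh * c := by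
      have := hmv v
      rw [← hc] at this
      field_simp [ne_of_gt (Fpos h)] at this ⊢
      rw [this, div_mul_cancel₀ _ (ne_of_gt (Fpos h))]
    -- pointwise bound
    have hpt : ∀ x : E, Real.exp c * (Real.exp (inner ℝ x h : ℝ)
        + ((inner ℝ x v : ℝ) - c) * Real.exp (inner ℝ x h : ℝ)) ≤ Real.exp (inner ℝ x k : ℝ) := by
      intro x
      have hk' : (inner ℝ x k : ℝ) = (inner ℝ x h : ℝ) + (inner ℝ x v : ℝ) := by
        rw [hv, inner_sub_right]; ring
      have h1 : ((inner ℝ x v : ℝ) - c) + 1 ≤ Real.exp ((inner ℝ x v : ℝ) - c) :=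
        Real.add_one_le_exp _
      have h2 : Real.exp (inner ℝ x k : ℝ)
          = Real.exp (inner ℝ x h : ℝ) * (Real.exp c * Real.exp ((inner ℝ x v : ℝ) - c)) := by
        rw [hk', Real.exp_add]
        congr 1
        rw [← Real.exp_add]
        congr 1
        ring
      rw [h2]
      have h3 := Real.exp_pos ((inner ℝ x h : ℝ))
      have h4 := Real.exp_pos c
      nlinarith [mul_le_mul_of_nonneg_left h1 (le_of_lt (mul_pos h3 h4))]
    -- integrate
    have int_g : Integrable (fun x => ((inner ℝ x v : ℝ) - c) * Real.exp (inner ℝ x h : ℝ)) μ := by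
      refine intgr _ ((R * ‖v‖ + |c|) * Real.exp (R * ‖h‖))
        (((continuous_id.inner continuous_const).sub continuous_const).mul (cont h)) ?_
      filter_upwards [hnorm] with x hx
      rw [Real.norm_eq_abs, abs_mul, abs_of_pos (Real.exp_pos _)]
      refine mul_le_mul ?_ (Real.exp_le_exp.2 (hinner_le h x hx)) (Real.exp_pos _).le
        (by positivity)
      refine (abs_sub _ _).trans (add_le_add ?_ le_rfl)
      exact (abs_real_inner_le_norm x v).trans (mul_le_mul_of_nonneg_right hx (norm_nonneg v))
    have hint_le : Real.exp c * Fh ≤ ∫ x, Real.exp (inner ℝ x k : ℝ) ∂μ := by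
      have hle : ∫ x, Real.exp c * (Real.exp (inner ℝ x h : ℝ)
            + ((inner ℝ x v : ℝ) - c) * Real.exp (inner ℝ x h : ℝ)) ∂μ
          ≤ ∫ x, Real.exp (inner ℝ x k : ℝ) ∂μ := by
        refine integral_mono (Integrable.const_mul ((int_exp h).add int_g) _) (int_exp k) ?_
        intro x
        exact hpt x
      have heq : ∫ x, Real.exp c * (Real.exp (inner ℝ x h : ℝ)
            + ((inner ℝ x v : ℝ) - c) * Real.exp (inner ℝ x h : ℝ)) ∂μ = Real.exp c * Fh := by
        rw [show (fun x => Real.exp c * (Real.exp (inner ℝ x h : ℝ)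
            + ((inner ℝ x v : ℝ) - c) * Real.exp (inner ℝ x h : ℝ)))
            = fun x => Real.exp c • (Real.exp (inner ℝ x h : ℝ)
            + ((inner ℝ x v : ℝ) - c) * Real.exp (inner ℝ x h : ℝ)) from rfl,
          integral_smul, smul_eq_mul, integral_add (int_exp h) int_g]
        have : ∫ x, ((inner ℝ x v : ℝ) - c) * Real.exp (inner ℝ x h : ℝ) ∂μ
            = Fh * c - c * Fh := by
          have : (fun x => ((inner ℝ x v : ℝ) - c) * Real.exp (inner ℝ x h : ℝ))
              = fun x => Real.exp (inner ℝ x h : ℝ) * (inner ℝ x v : ℝ)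
                - c * Real.exp (inner ℝ x h : ℝ) := by
            funext x; ring
          rw [this, integral_sub ?_ ((int_exp h).const_mul c), hIvc,
            show (fun x => c * Real.exp (inner ℝ x h : ℝ))
              = fun x => c • Real.exp (inner ℝ x h : ℝ) from rfl, integral_smul, smul_eq_mul]
          · have : (fun x => Real.exp (inner ℝ x h : ℝ) * (inner ℝ x v : ℝ)) = fun x =>
                ((inner ℝ x v : ℝ) - c) * Real.exp (inner ℝ x h : ℝ)
                  + c * Real.exp (inner ℝ x h : ℝ) := by funext x; ring
            rw [this]
            exact int_g.add ((int_exp h).const_mul c)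
        rw [this]
        ring
      linarith [hle, heq.symm.le]
    -- take logs
    have hlog := Real.log_le_log (mul_pos (Real.exp_pos c) (Fpos h)) hint_le
    rw [Real.log_mul (Real.exp_pos c).ne' (Fpos h).ne', Real.log_exp] at hlog
    rw [hG k, hG h]
    linarith [hlog]
  -- conclude
  have hlb : ((G h - (inner ℝ m h : ℝ) : ℝ) : EReal) ≤ S m := by
    rw [hS m]
    refine le_iInf fun k => ?_
    rw [EReal.coe_le_coe_iff]
    have := key k
    rw [inner_sub_right] at this
    linarith
  have : (⊥ : EReal) < ((G h - (inner ℝ m h : ℝ) : ℝ) : EReal) := EReal.bot_lt_coe _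
  simpa [Set.mem_setOf_eq, hgrad] using lt_of_lt_of_le this hlb
end

section
/- Let C = { m ∈ E : S(m) > −∞ }. For each m in the relative interior of C, there exists h ∈ E such that ∇G(h) = m. -/
set_option maxHeartbeats 1000000
set_option synthInstance.maxHeartbeats 400000

open MeasureTheory Real

section Aux
variable {E : Type*} [NormedAddCommGroup E] [InnerProductSpace ℝ E]
    [FiniteDimensional ℝ E] [MeasurableSpace E] [BorelSpace E] [CompleteSpace E]

theorem stmt3_aux_int (μ : Measure E) [IsProbabilityMeasure μ] {R : ℝ}
    (hae : ∀ᵐ x ∂μ, ‖x‖ ≤ R) (h : E) :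
    Integrable (fun x => Real.exp (inner ℝ x h : ℝ)) μ := by
  apply Integrable.mono' (integrable_const (Real.exp (R * ‖h‖)))
  · exact (Continuous.rexp (continuous_id.inner continuous_const)).aestronglyMeasurable
  · filter_upwards [hae] with x hx
    rw [Real.norm_eq_abs, abs_of_pos (Real.exp_pos _)]
    apply Real.exp_le_exp.2
    calc (inner ℝ x h : ℝ) ≤ ‖x‖ * ‖h‖ := real_inner_le_norm x h
    _ ≤ R * ‖h‖ := by nlinarith [norm_nonneg h, norm_nonneg x]

theorem stmt3_aux_fderiv (μ : Measure E) [IsProbabilityMeasure μ] {R : ℝ} (hR : 0 ≤ R)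
    (hae : ∀ᵐ x ∂μ, ‖x‖ ≤ R) (h₀ : E) :
    HasFDerivAt (fun h => ∫ x, Real.exp (inner ℝ x h : ℝ) ∂μ)
      (∫ x, Real.exp (inner ℝ x h₀ : ℝ) • (innerSL ℝ x) ∂μ) h₀ := by
  apply hasFDerivAt_integral_of_dominated_of_fderiv_le
    (F' := fun (h : E) (x : E) => Real.exp (inner ℝ x h : ℝ) • (innerSL ℝ x))
    (bound := fun _ => R * Real.exp (R * (‖h₀‖ + 1))) (Metric.ball_mem_nhds h₀ one_pos)
  · exact Filter.Eventually.of_forall fun h =>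
      (Continuous.rexp (continuous_id.inner continuous_const)).aestronglyMeasurable
  · exact stmt3_aux_int μ hae h₀
  · apply Continuous.aestronglyMeasurable
    exact ((Continuous.rexp (continuous_id.inner continuous_const)).smul
      (innerSL ℝ).continuous)
  · filter_upwards [hae] with x hx h hball
    rw [norm_smul (rexp (inner ℝ x h : ℝ)) ((innerSL ℝ) x), innerSL_apply_norm,
      Real.norm_eq_abs, abs_of_pos (Real.exp_pos _)]
    have hb : ‖h‖ ≤ ‖h₀‖ + 1 := by
      have h3 := mem_ball_iff_norm.1 hball
      have h4 := norm_sub_norm_le h h₀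
      linarith
    have h2 : Real.exp (inner ℝ x h : ℝ) ≤ Real.exp (R * (‖h₀‖ + 1)) := by
      apply Real.exp_le_exp.2
      calc (inner ℝ x h : ℝ) ≤ ‖x‖ * ‖h‖ := real_inner_le_norm x h
      _ ≤ R * (‖h₀‖ + 1) := by nlinarith [norm_nonneg h, norm_nonneg x]
    calc Real.exp (inner ℝ x h : ℝ) * ‖x‖ ≤ Real.exp (R * (‖h₀‖ + 1)) * R := by
          apply mul_le_mul h2 hx (norm_nonneg x) (Real.exp_pos _).le
    _ = R * Real.exp (R * (‖h₀‖ + 1)) := mul_comm _ _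
  · exact integrable_const _
  · refine Filter.Eventually.of_forall fun x => fun h _ => ?_
    exact ((innerSL ℝ x).hasFDerivAt).exp

theorem stmt3_aux_pos (μ : Measure E) [IsProbabilityMeasure μ] {R : ℝ}
    (hae : ∀ᵐ x ∂μ, ‖x‖ ≤ R) (h : E) :
    0 < ∫ x, Real.exp (inner ℝ x h : ℝ) ∂μ := by
  rw [integral_pos_iff_support_of_nonneg (fun x => (Real.exp_pos _).le)
    (stmt3_aux_int μ hae h)]
  have : Function.support (fun x : E => Real.exp (inner ℝ x h : ℝ)) = Set.univ := by
    ext x; simp [Function.support, (Real.exp_pos _).ne']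
  rw [this]
  simp

end Aux

/-- Let `C = {m : S m > −∞}` be the set of magnetizations with
finite mean-field entropy. For every `m` in the relative (intrinsic) interior
of `C` there exists `h ∈ E` with `∇G h = m`. -/
theorem stmt_3
    {E : Type*} [NormedAddCommGroup E] [InnerProductSpace ℝ E]
    [FiniteDimensional ℝ E] [MeasurableSpace E] [BorelSpace E]
    [CompleteSpace E]
    (μ : Measure E) [IsProbabilityMeasure μ]
    (Ω : Set E) (hΩ : IsCompact Ω) (hsupp : μ Ωᶜ = 0)
    (G : E → ℝ)
    (hG : ∀ h : E, G h = Real.log (∫ x, Real.exp (inner ℝ x h : ℝ) ∂μ))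
    (S : E → EReal)
    (hS : ∀ m : E, S m = ⨅ h : E, ((G h - inner ℝ m h : ℝ) : EReal))
    (C : Set E) (hC : C = {m : E | ⊥ < S m}) :
    ∀ m ∈ intrinsicInterior ℝ C, ∃ h : E, gradient G h = m := by
  intro m hm
  -- bound on the support
  obtain ⟨R₁, hΩR⟩ := hΩ.isBounded.exists_norm_le
  set R : ℝ := max R₁ 0 with hRdef
  have hR0 : (0:ℝ) ≤ R := le_max_right _ _
  have haeΩ : ∀ᵐ x ∂μ, x ∈ Ω := by
    rw [ae_iff]
    exact hsupp
  have hae : ∀ᵐ x ∂μ, ‖x‖ ≤ R := by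
    filter_upwards [haeΩ] with x hx
    exact (hΩR x hx).trans (le_max_left _ _)
  -- the partition function
  set Z : E → ℝ := fun h => ∫ x, Real.exp (inner ℝ x h : ℝ) ∂μ with hZdef
  have hZpos : ∀ h, 0 < Z h := fun h => stmt3_aux_pos μ hae h
  have hfd : ∀ h, HasFDerivAt Z (∫ x, Real.exp (inner ℝ x h : ℝ) • (innerSL ℝ x) ∂μ) h :=
    fun h => stmt3_aux_fderiv μ hR0 hae h
  have hGfun : G = fun h => Real.log (Z h) := funext hG
  have hGd : ∀ h, HasFDerivAt G
      ((Z h)⁻¹ • ∫ x, Real.exp (inner ℝ x h : ℝ) • (innerSL ℝ x) ∂μ) h := by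
    intro h
    rw [hGfun]
    exact (hfd h).log (hZpos h).ne'
  have hGcont : Continuous G := by
    rw [continuous_iff_continuousAt]
    exact fun h => (hGd h).continuousAt
  -- the function to minimize
  set f : E → ℝ := fun h => G h - inner ℝ m h with hfdef
  have hfcont : Continuous f :=
    hGcont.sub (continuous_const.inner continuous_id)
  -- membership in C
  have memC : ∀ m' : E, m' ∈ C ↔ ∃ β : ℝ, ∀ h, β ≤ G h - inner ℝ m' h := by
    intro m'
    rw [hC, Set.mem_setOf_eq, hS]
    constructor
    · intro hbot
      have hne_top : (⨅ h : E, ((G h - inner ℝ m' h : ℝ) : EReal)) ≠ ⊤ :=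
        ne_top_of_le_ne_top (EReal.coe_ne_top (G 0 - inner ℝ m' 0)) (iInf_le _ 0)
      refine ⟨(⨅ h : E, ((G h - inner ℝ m' h : ℝ) : EReal)).toReal, fun h => ?_⟩
      rw [← EReal.coe_le_coe_iff, EReal.coe_toReal hne_top hbot.ne']
      exact iInf_le _ h
    · rintro ⟨β, hβ⟩
      refine lt_of_lt_of_le (EReal.bot_lt_coe β) (le_iInf fun h => ?_)
      exact EReal.coe_le_coe_iff.2 (hβ h)
  have hmC : m ∈ C := intrinsicInterior_subset hm
  have hm_span : m ∈ affineSpan ℝ C := subset_affineSpan ℝ C hmC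
  -- the ball in the affine hull
  obtain ⟨ε, hε, hball⟩ : ∃ ε > 0, ∀ y : E, y ∈ affineSpan ℝ C → dist y m < ε → y ∈ C := by
    obtain ⟨y, hy, hym⟩ := hm
    rw [mem_interior_iff_mem_nhds, Metric.mem_nhds_iff] at hy
    obtain ⟨ε, hεpos, hsub⟩ := hy
    refine ⟨ε, hεpos, fun z hz hdist => ?_⟩
    have hmem : (⟨z, hz⟩ : affineSpan ℝ C) ∈ Metric.ball y ε := by
      rw [Metric.mem_ball, Subtype.dist_eq, hym]
      exact hdist
    exact hsub hmem
  set L : Submodule ℝ E := (affineSpan ℝ C).direction with hLdef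
  -- Jensen: conditional averages belong to C
  have hJen : ∀ B : Set E, MeasurableSet B → 0 < μ B →
      ∃ mB : E, mB ∈ C ∧
        ∀ w : E, (μ B).toReal * (inner ℝ (mB - m) w : ℝ) = ∫ x in B, (inner ℝ (x - m) w : ℝ) ∂μ := by
    intro B hBmeas hBpos
    have hfin : μ B ≠ ⊤ := (measure_lt_top μ B).ne
    set c : ℝ := (μ B).toReal with hcdef
    have hc : 0 < c := ENNReal.toReal_pos hBpos.ne' hfin
    have hid_int : Integrable (fun x : E => x) (μ.restrict B) := by
      apply Integrable.mono' (integrable_const R)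
      · exact aestronglyMeasurable_id
      · exact ae_restrict_of_ae hae
    have hint_inner : ∀ w : E, Integrable (fun x => (inner ℝ x w : ℝ)) (μ.restrict B) := by
      intro w
      apply Integrable.mono' (integrable_const (R * ‖w‖))
      · exact (continuous_id.inner continuous_const).aestronglyMeasurable
      · filter_upwards [ae_restrict_of_ae hae] with x hx
        rw [Real.norm_eq_abs]
        calc |(inner ℝ x w : ℝ)| ≤ ‖x‖ * ‖w‖ := abs_real_inner_le_norm x w
        _ ≤ R * ‖w‖ := by nlinarith [norm_nonneg w, norm_nonneg x]
    set mB : E := c⁻¹ • ∫ x in B, x ∂μ with hmBdef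
    have hinner : ∀ w : E, (inner ℝ mB w : ℝ) = c⁻¹ * ∫ x in B, (inner ℝ x w : ℝ) ∂μ := by
      intro w
      rw [hmBdef, real_inner_smul_left]
      congr 1
      rw [real_inner_comm, ← integral_inner hid_int w]
      exact integral_congr_ae (Filter.Eventually.of_forall fun x => real_inner_comm _ _)
    refine ⟨mB, ?_, ?_⟩
    · rw [memC]
      refine ⟨Real.log c, fun h => ?_⟩
      set a : ℝ := c⁻¹ * ∫ x in B, (inner ℝ x h : ℝ) ∂μ with hadef
      have hIa : ∫ x in B, (inner ℝ x h : ℝ) ∂μ = c * a := by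
        rw [hadef]; field_simp
      have step1 : ∫ x in B, (Real.exp a * (1 + ((inner ℝ x h : ℝ) - a))) ∂μ
          ≤ ∫ x in B, Real.exp (inner ℝ x h : ℝ) ∂μ := by
        apply integral_mono
        · exact (((integrable_const (1:ℝ)).add ((hint_inner h).sub
            (integrable_const a))).const_mul (Real.exp a))
        · exact (stmt3_aux_int μ hae h).restrict
        · intro x
          have h1 : ((inner ℝ x h : ℝ) - a) + 1 ≤ Real.exp ((inner ℝ x h : ℝ) - a) :=
            Real.add_one_le_exp _
          have h2 := mul_le_mul_of_nonneg_left h1 (Real.exp_pos a).le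
          rw [← Real.exp_add] at h2
          have h3 : a + ((inner ℝ x h : ℝ) - a) = (inner ℝ x h : ℝ) := by ring
          rw [h3] at h2
          show Real.exp a * (1 + ((inner ℝ x h : ℝ) - a)) ≤ Real.exp (inner ℝ x h : ℝ)
          nlinarith [h2]
      have step2 : ∫ x in B, (Real.exp a * (1 + ((inner ℝ x h : ℝ) - a))) ∂μ = c * Real.exp a := by
        have hfe : (fun x : E => Real.exp a * (1 + ((inner ℝ x h : ℝ) - a)))
            = fun x : E => (Real.exp a * (1 - a)) + Real.exp a * (inner ℝ x h : ℝ) := by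
          funext x; ring
        rw [hfe, integral_add (integrable_const _) ((hint_inner h).const_mul _),
          MeasureTheory.integral_const_mul, MeasureTheory.integral_const_mul, hIa]
        simp only [integral_const, measureReal_def, Measure.restrict_apply_univ, smul_eq_mul]
        ring
      have step3 : ∫ x in B, Real.exp (inner ℝ x h : ℝ) ∂μ ≤ Z h :=
        setIntegral_le_integral (stmt3_aux_int μ hae h)
          (Filter.Eventually.of_forall fun x => (Real.exp_pos _).le)
      have key : c * Real.exp a ≤ Z h := by linarith
      have hlog : Real.log (c * Real.exp a) ≤ Real.log (Z h) :=
        Real.log_le_log (by positivity) key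
      rw [Real.log_mul hc.ne' (Real.exp_pos a).ne', Real.log_exp] at hlog
      have hGh : G h = Real.log (Z h) := hG h
      have hmBh : (inner ℝ mB h : ℝ) = a := hinner h
      rw [hGh, hmBh]
      linarith
    · intro w
      rw [inner_sub_left, hinner w]
      have hsub : ∫ x in B, (inner ℝ (x - m) w : ℝ) ∂μ
          = (∫ x in B, (inner ℝ x w : ℝ) ∂μ) - c * (inner ℝ m w : ℝ) := by
        have : ∀ x : E, (inner ℝ (x - m) w : ℝ) = (inner ℝ x w : ℝ) - (inner ℝ m w : ℝ) :=
          fun x => inner_sub_left _ _ _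
        simp only [this]
        rw [integral_sub (hint_inner w) (integrable_const _)]
        simp only [integral_const, measureReal_def, Measure.restrict_apply_univ, smul_eq_mul, hcdef]
      rw [hsub]
      field_simp
  -- directions orthogonal to L are a.e. degenerate
  have hperp : ∀ u : E, u ∈ Lᗮ → ∀ᵐ x ∂μ, (inner ℝ (x - m) u : ℝ) = 0 := by
    have claim : ∀ w : E, w ∈ Lᗮ → ∀ δ' : ℝ, 0 < δ' →
        μ {x : E | δ' ≤ (inner ℝ (x - m) w : ℝ)} = 0 := by
      intro w hw δ' hδ'
      by_contra hne
      set B : Set E := {x : E | δ' ≤ (inner ℝ (x - m) w : ℝ)} with hBdef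
      have hBpos : 0 < μ B := pos_iff_ne_zero.2 hne
      have hBmeas : MeasurableSet B := by
        apply measurableSet_le measurable_const
        exact ((continuous_id.sub continuous_const).inner continuous_const).measurable
      obtain ⟨mB, hmBC, hmBeq⟩ := hJen B hBmeas hBpos
      have hmBL : mB - m ∈ L := by
        rw [hLdef]
        exact AffineSubspace.vsub_mem_direction (subset_affineSpan ℝ C hmBC) hm_span
      have h1 : (inner ℝ (mB - m) w : ℝ) = 0 :=
        (Submodule.mem_orthogonal L w).1 hw (mB - m) hmBL
      have hint : Integrable (fun x => (inner ℝ (x - m) w : ℝ)) (μ.restrict B) := by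
        apply Integrable.mono' (integrable_const ((R + ‖m‖) * ‖w‖))
        · exact ((continuous_id.sub continuous_const).inner continuous_const).aestronglyMeasurable
        · filter_upwards [ae_restrict_of_ae hae] with x hx
          rw [Real.norm_eq_abs]
          calc |(inner ℝ (x - m) w : ℝ)| ≤ ‖x - m‖ * ‖w‖ := abs_real_inner_le_norm _ w
          _ ≤ (R + ‖m‖) * ‖w‖ := by
              have := norm_sub_le x m
              nlinarith [norm_nonneg w, norm_nonneg m, norm_nonneg (x - m)]
      have h3 : δ' * (μ B).toReal ≤ ∫ x in B, (inner ℝ (x - m) w : ℝ) ∂μ := by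
        have h5 := setIntegral_mono_on (integrable_const δ') hint hBmeas (fun x hx => hx)
        rw [setIntegral_const, smul_eq_mul, measureReal_def] at h5
        linarith [h5]
      have hc : 0 < (μ B).toReal := ENNReal.toReal_pos hBpos.ne' (measure_lt_top μ B).ne
      rw [← hmBeq w, h1, mul_zero] at h3
      nlinarith
    have posnull : ∀ w : E, w ∈ Lᗮ → μ {x : E | 0 < (inner ℝ (x - m) w : ℝ)} = 0 := by
      intro w hw
      have hsub : {x : E | 0 < (inner ℝ (x - m) w : ℝ)}
          ⊆ ⋃ n : ℕ, {x : E | 1 / ((n : ℝ) + 1) ≤ (inner ℝ (x - m) w : ℝ)} := by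
        intro x hx
        obtain ⟨n, hn⟩ := exists_nat_one_div_lt (show (0:ℝ) < (inner ℝ (x - m) w : ℝ) from hx)
        exact Set.mem_iUnion.2 ⟨n, hn.le⟩
      exact measure_mono_null hsub
        (measure_iUnion_null fun n => claim w hw _ (by positivity))
    intro u hu
    have hneg : μ {x : E | (inner ℝ (x - m) u : ℝ) < 0} = 0 := by
      have heq : {x : E | (inner ℝ (x - m) u : ℝ) < 0}
          = {x : E | 0 < (inner ℝ (x - m) (-u) : ℝ)} := by
        ext x
        simp [inner_neg_right]
      rw [heq]
      exact posnull (-u) (Submodule.neg_mem _ hu)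
    rw [ae_iff]
    have hsub2 : {x : E | ¬ (inner ℝ (x - m) u : ℝ) = 0}
        ⊆ {x : E | 0 < (inner ℝ (x - m) u : ℝ)} ∪ {x : E | (inner ℝ (x - m) u : ℝ) < 0} := by
      intro x hx
      rcases lt_or_gt_of_ne (hx : (inner ℝ (x - m) u : ℝ) ≠ 0) with h | h
      · exact Or.inr h
      · exact Or.inl h
    exact measure_mono_null hsub2 (measure_union_null (posnull u hu) hneg)
  -- f is invariant under orthogonal translations
  have hproj : ∀ h u : E, u ∈ Lᗮ → f (h + u) = f h := by
    intro h u hu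
    have hZeq : Z (h + u) = Z h * Real.exp (inner ℝ m u : ℝ) := by
      have hcongr : ∀ᵐ x ∂μ, Real.exp (inner ℝ x (h + u) : ℝ)
          = Real.exp (inner ℝ x h : ℝ) * Real.exp (inner ℝ m u : ℝ) := by
        filter_upwards [hperp u hu] with x hx
        rw [inner_sub_left] at hx
        have hxu : (inner ℝ x u : ℝ) = inner ℝ m u := by linarith
        rw [inner_add_right, Real.exp_add, hxu]
      show (∫ x, Real.exp (inner ℝ x (h + u) : ℝ) ∂μ) = Z h * Real.exp (inner ℝ m u : ℝ)
      rw [integral_congr_ae hcongr, integral_mul_const]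
    have hGeq : G (h + u) = G h + (inner ℝ m u : ℝ) := by
      rw [hGfun]
      simp only
      rw [hZeq, Real.log_mul (hZpos h).ne' (Real.exp_pos _).ne', Real.log_exp]
    show G (h + u) - (inner ℝ m (h + u) : ℝ) = G h - (inner ℝ m h : ℝ)
    rw [hGeq, inner_add_right]
    ring
  -- the orthonormal basis of L
  set k : ℕ := Module.finrank ℝ L
  set b : OrthonormalBasis (Fin k) ℝ L := stdOrthonormalBasis ℝ L with hbdef
  set e : Fin k → E := fun i => (b i : E) with hedef
  have heL : ∀ i, e i ∈ L := fun i => (b i).2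
  have heN : ∀ i, ‖e i‖ = 1 := fun i => b.orthonormal.1 i
  set δ : ℝ := ε / 2 with hδdef
  have hδpos : 0 < δ := half_pos hε
  have hvert : ∀ i : Fin k, ∀ σ : ℝ, |σ| = δ → m + σ • e i ∈ C := by
    intro i σ hσ
    apply hball
    · have h1 : σ • e i ∈ L := L.smul_mem σ (heL i)
      have h2 := AffineSubspace.vadd_mem_of_mem_direction h1 hm_span
      have h3 : σ • e i +ᵥ m = m + σ • e i := by
        simp [vadd_eq_add, add_comm]
      rwa [h3] at h2
    · rw [dist_eq_norm]
      have h4 : m + σ • e i - m = σ • e i := by abel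
      rw [h4, norm_smul, heN i, mul_one, Real.norm_eq_abs, hσ]
      rw [hδdef]
      linarith
  -- coordinate bounds
  have hβ : ∃ β : Fin k → ℝ, ∀ h : E, ∀ i, δ * |(inner ℝ (e i) h : ℝ)| ≤ f h - β i := by
    have hp : ∀ i : Fin k, ∃ βi : ℝ, ∀ h,
        δ * (inner ℝ (e i) h : ℝ) ≤ f h - βi ∧ δ * (-(inner ℝ (e i) h : ℝ)) ≤ f h - βi := by
      intro i
      obtain ⟨β₁, hβ₁⟩ := (memC _).1 (hvert i δ (abs_of_pos hδpos))
      obtain ⟨β₂, hβ₂⟩ := (memC _).1 (hvert i (-δ) (by rw [abs_neg]; exact abs_of_pos hδpos))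
      refine ⟨min β₁ β₂, fun h => ⟨?_, ?_⟩⟩
      · have h1 := hβ₁ h
        rw [inner_add_left, real_inner_smul_left] at h1
        have h2 : min β₁ β₂ ≤ β₁ := min_le_left _ _
        show δ * (inner ℝ (e i) h : ℝ) ≤ (G h - (inner ℝ m h : ℝ)) - min β₁ β₂
        linarith
      · have h1 := hβ₂ h
        rw [inner_add_left, real_inner_smul_left] at h1
        have h2 : min β₁ β₂ ≤ β₂ := min_le_right _ _
        show δ * (-(inner ℝ (e i) h : ℝ)) ≤ (G h - (inner ℝ m h : ℝ)) - min β₁ β₂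
        linarith
    choose β hβ using hp
    refine ⟨β, fun h i => ?_⟩
    rcases abs_cases (inner ℝ (e i) h : ℝ) with ⟨habs, _⟩ | ⟨habs, _⟩ <;> rw [habs]
    · exact (hβ i h).1
    · exact (hβ i h).2
  obtain ⟨β, hβ⟩ := hβ
  -- norm bound on L
  have hnorm : ∀ h : E, h ∈ L → ‖h‖ ≤ ∑ i, |(inner ℝ (e i) h : ℝ)| := by
    intro h hh
    set h' : L := ⟨h, hh⟩ with hh'def
    have hsum := b.sum_inner_mul_inner h' h'
    have hcoe : ∀ i, (inner ℝ (b i) h' : ℝ) = (inner ℝ (e i) h : ℝ) := fun i => rfl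
    have hcoe2 : ∀ i, (inner ℝ h' (b i) : ℝ) = (inner ℝ (e i) h : ℝ) := fun i =>
      (real_inner_comm _ _).trans (hcoe i)
    have hns : ‖h‖ ^ 2 = ∑ i, (inner ℝ (e i) h : ℝ) ^ 2 := by
      have h1 : (inner ℝ h' h' : ℝ) = ‖h‖ ^ 2 := real_inner_self_eq_norm_sq h
      rw [← h1, ← hsum]
      apply Finset.sum_congr rfl
      intro i _
      rw [hcoe, hcoe2, sq]
    have h2 : ∑ i, (inner ℝ (e i) h : ℝ) ^ 2 ≤ (∑ i, |(inner ℝ (e i) h : ℝ)|) ^ 2 := by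
      have h3 := Finset.sum_sq_le_sq_sum_of_nonneg
        (s := Finset.univ) (f := fun i : Fin k => |(inner ℝ (e i) h : ℝ)|)
        (fun i _ => abs_nonneg _)
      simpa [sq_abs] using h3
    nlinarith [norm_nonneg h,
      Finset.sum_nonneg (fun i (_ : i ∈ Finset.univ) => abs_nonneg ((inner ℝ (e i) h : ℝ)))]
  -- level set bound
  set R₀ : ℝ := max 0 (∑ i, (f 0 - β i) / δ) with hR₀def
  have hlevel : ∀ h : E, h ∈ L → f h ≤ f 0 → ‖h‖ ≤ R₀ := by
    intro h hh hfh
    have h1 := hnorm h hh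
    have h2 : ∑ i, |(inner ℝ (e i) h : ℝ)| ≤ ∑ i, (f 0 - β i) / δ := by
      apply Finset.sum_le_sum
      intro i _
      rw [le_div_iff₀ hδpos]
      have h3 := hβ h i
      nlinarith
    calc ‖h‖ ≤ ∑ i, |(inner ℝ (e i) h : ℝ)| := h1
    _ ≤ ∑ i, (f 0 - β i) / δ := h2
    _ ≤ R₀ := le_max_right _ _
  -- compact minimization
  set K : Set E := (L : Set E) ∩ Metric.closedBall 0 R₀ with hKdef
  have hKne : (0:E) ∈ K := ⟨L.zero_mem, Metric.mem_closedBall_self (le_max_left _ _)⟩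
  have hKcp : IsCompact K :=
    (isCompact_closedBall (0:E) R₀).inter_left (Submodule.closed_of_finiteDimensional L)
  obtain ⟨hstar, hstarK, hstarmin⟩ := hKcp.exists_isMinOn ⟨0, hKne⟩ hfcont.continuousOn
  -- global minimality
  have hglobal : ∀ h : E, f hstar ≤ f h := by
    intro h
    haveI : Submodule.HasOrthogonalProjection L := by infer_instance
    set p : E := (L.orthogonalProjectionOnto h : E) with hpdef
    have hpL : p ∈ L := SetLike.coe_mem _
    have hup : h - p ∈ Lᗮ := by exact L.sub_starProjection_mem_orthogonal h
    have h1 : f h = f p := by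
      have h2 := hproj p (h - p) hup
      have h3 : p + (h - p) = h := by abel
      rwa [h3] at h2
    rw [h1]
    by_cases hc : f p ≤ f 0
    · exact hstarmin ⟨hpL, mem_closedBall_zero_iff.2 (hlevel p hpL hc)⟩
    · have h0 : f hstar ≤ f 0 := hstarmin hKne
      push_neg at hc
      linarith
  -- extract the gradient
  have hlocal : IsLocalMin f hstar := Filter.Eventually.of_forall hglobal
  have hGgrad := hGd hstar
  have hinnerFD : HasFDerivAt (fun h : E => (inner ℝ m h : ℝ)) (innerSL ℝ m) hstar :=
    (innerSL ℝ m).hasFDerivAt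
  have hfgrad : HasFDerivAt f
      (((Z hstar)⁻¹ • ∫ x, Real.exp (inner ℝ x hstar : ℝ) • (innerSL ℝ x) ∂μ)
        - innerSL ℝ m) hstar := hGgrad.sub hinnerFD
  have hzero := hlocal.hasFDerivAt_eq_zero hfgrad
  have hD : ((Z hstar)⁻¹ • ∫ x, Real.exp (inner ℝ x hstar : ℝ) • (innerSL ℝ x) ∂μ)
      = innerSL ℝ m := by rwa [sub_eq_zero] at hzero
  refine ⟨hstar, ?_⟩
  have hgradat : HasGradientAt G m hstar := by
    rw [hasGradientAt_iff_hasFDerivAt]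
    have htd : (InnerProductSpace.toDual ℝ E) m = innerSL ℝ m := by
      apply ContinuousLinearMap.ext
      intro y
      simp [InnerProductSpace.toDual_apply_apply]
    rw [htd, ← hD]
    exact hGgrad
  exact hgradat.gradient
end

section
/- Let J₁ < J₂ and let m₁ be a global minimizer of Φ_{J₁} and m₂ a global minimizer of Φ_{J₂} on Conv(Ω). Then |m₁| ≤ |m₂|; i.e., the norm of the global minimizer of the mean-field free-energy function is non-decreasing in J. -/
open MeasureTheory

/-- Monotonicity of the norm of global minimizers of the
mean-field free energy `Φ_J(m) = −(J/2)|m|² − S m` on `Conv Ω`: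
if `J₁ < J₂` and `m₁`, `m₂` are global minimizers of `Φ_{J₁}`, `Φ_{J₂}`
respectively, then `‖m₁‖ ≤ ‖m₂‖`. -/
theorem stmt_7
    {E : Type*} [NormedAddCommGroup E] [InnerProductSpace ℝ E]
    [FiniteDimensional ℝ E] [MeasurableSpace E] [BorelSpace E]
    (μ : Measure E) [IsProbabilityMeasure μ]
    (Ω : Set E) (hΩ : IsCompact Ω) (hsupp : μ Ωᶜ = 0)
    (G : E → ℝ)
    (hG : ∀ h : E, G h = Real.log (∫ x, Real.exp (inner ℝ x h : ℝ) ∂μ))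
    (S : E → ℝ)
    (hS : ∀ m : E, S m = sInf {y : ℝ | ∃ h : E, y = G h - inner ℝ m h})
    (Φ : ℝ → E → ℝ)
    (hΦ : ∀ J : ℝ, ∀ m : E, Φ J m = -(J / 2) * ‖m‖ ^ 2 - S m)
    (J₁ J₂ : ℝ) (hJ : J₁ < J₂) (m₁ m₂ : E)
    (hm₁ : m₁ ∈ closure (convexHull ℝ Ω))
    (hm₂ : m₂ ∈ closure (convexHull ℝ Ω))
    (hmin₁ : IsMinOn (Φ J₁) (closure (convexHull ℝ Ω)) m₁)
    (hmin₂ : IsMinOn (Φ J₂) (closure (convexHull ℝ Ω)) m₂) :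
    ‖m₁‖ ≤ ‖m₂‖ := by
  have h1 : Φ J₁ m₁ ≤ Φ J₁ m₂ := hmin₁ hm₂
  have h2 : Φ J₂ m₂ ≤ Φ J₂ m₁ := hmin₂ hm₁
  rw [hΦ, hΦ] at h1 h2
  have hsq : ‖m₁‖ ^ 2 ≤ ‖m₂‖ ^ 2 := by nlinarith
  nlinarith [norm_nonneg m₁, norm_nonneg m₂]
end

section
/- For the Ising mean-field theory: for J > 2, the maximal positive solution ρ of ρ = tanh(Jρ/2) satisfies J(1 − ρ²) < 2. -/
/-!
Writing `x = Jρ/2`, the fixed-point equation says `ρ = tanh x`, so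
`J(1 − ρ²) = (2x/tanh x)·cosh⁻² x = 4x / sinh 2x`, which is `< 2` because `sinh t > t` for `t > 0`.
-/

open Real

theorem Real.one_sub_tanh_sq (x : ℝ) : 1 - tanh x ^ 2 = (cosh x ^ 2)⁻¹ := by
  have hc : cosh x ≠ 0 := (cosh_pos x).ne'
  rw [tanh_eq_sinh_div_cosh]
  field_simp
  linear_combination cosh_sq_sub_sinh_sq x

theorem Real.mul_one_sub_tanh_sq_lt_tanh {x : ℝ} (hx : 0 < x) :
    x * (1 - tanh x ^ 2) < tanh x := by
  have hc : 0 < cosh x := cosh_pos x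
  have hx_lt : x < sinh x * cosh x := by
    have h := self_lt_sinh_iff.mpr (by linarith : 0 < 2 * x)
    rw [sinh_two_mul] at h
    linarith
  rw [one_sub_tanh_sq, tanh_eq_sinh_div_cosh, ← div_eq_mul_inv, div_lt_div_iff₀ (by positivity) hc]
  nlinarith

theorem stmt_10_general
    (J ρ : ℝ) (hJ : 2 < J)
    (hρ_pos : 0 < ρ)
    (hρ_sol : ρ = Real.tanh (J * ρ / 2)) :
    J * (1 - ρ ^ 2) < 2 := by
  have hx : 0 < J * ρ / 2 := by
    have : 0 < J := by linarith
    positivity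
  have key := mul_one_sub_tanh_sq_lt_tanh hx
  rw [← hρ_sol] at key
  have hmul : J * (1 - ρ ^ 2) * ρ < 2 * ρ := by linarith
  exact lt_of_mul_lt_mul_right hmul hρ_pos.le

/-- For the Ising mean-field theory with `J > 2`, the maximal
positive solution `ρ` of `ρ = tanh(Jρ/2)` satisfies `J(1 − ρ²) < 2`. -/
theorem stmt_10
    (J ρ : ℝ) (hJ : 2 < J)
    (hρ_pos : 0 < ρ)
    (hρ_sol : ρ = Real.tanh (J * ρ / 2))
    (hρ_max : ∀ ρ' : ℝ, 0 < ρ' → ρ' = Real.tanh (J * ρ' / 2) → ρ' ≤ ρ) :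
    J * (1 - ρ ^ 2) < 2 :=
  stmt_10_general J ρ hJ hρ_pos hρ_sol
end

section
/- For J ≤ 2, the only solution ρ ≥ 0 of ρ = tanh(Jρ/2) is ρ = 0; for J > 2, there exists a unique positive solution ρ(J) ∈ (0,1), and J ↦ ρ(J) is increasing on (2,∞). -/
open Real Set Filter

lemma tanh_strictMono : StrictMono Real.tanh := by
  intro x y hxy
  rw [Real.tanh_eq_sinh_div_cosh, Real.tanh_eq_sinh_div_cosh,
    div_lt_div_iff₀ (Real.cosh_pos x) (Real.cosh_pos y)]
  have h : 0 < Real.sinh (y - x) := Real.sinh_pos_iff.mpr (by linarith)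
  rw [Real.sinh_sub] at h
  nlinarith
lemma tanh_lt_one (x : ℝ) : Real.tanh x < 1 := by
  rw [Real.tanh_eq_sinh_div_cosh, div_lt_one (Real.cosh_pos x)]
  exact Real.sinh_lt_cosh x
lemma tanh_pos {x : ℝ} (hx : 0 < x) : 0 < Real.tanh x := by
  rw [Real.tanh_eq_sinh_div_cosh]
  exact div_pos (Real.sinh_pos_iff.mpr hx) (Real.cosh_pos x)
lemma sinh_lt_mul_cosh {x : ℝ} (hx : 0 < x) : Real.sinh x < x * Real.cosh x := by
  set f : ℝ → ℝ := fun y => y * Real.cosh y - Real.sinh y with hf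
  have hderiv : ∀ y : ℝ, HasDerivAt f (y * Real.sinh y) y := by
    intro y
    have h := ((hasDerivAt_id y).mul (Real.hasDerivAt_cosh y)).sub (Real.hasDerivAt_sinh y)
    exact h.congr_deriv (by simp)
  have hmono : StrictMonoOn f (Ici 0) := by
    apply strictMonoOn_of_deriv_pos (convex_Ici 0)
    · exact ((continuous_id.mul Real.continuous_cosh).sub Real.continuous_sinh).continuousOn
    · intro y hy
      rw [interior_Ici] at hy
      rw [(hderiv y).deriv]
      exact mul_pos hy (Real.sinh_pos_iff.mpr hy)
  have := hmono (mem_Ici.mpr (le_refl 0)) (mem_Ici.mpr (le_of_lt hx)) hx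
  simp [hf] at this
  linarith
lemma tanh_lt_self {x : ℝ} (hx : 0 < x) : Real.tanh x < x := by
  rw [Real.tanh_eq_sinh_div_cosh, div_lt_iff₀ (Real.cosh_pos x)]
  exact sinh_lt_mul_cosh hx
lemma hasDerivAt_tanh (x : ℝ) : HasDerivAt Real.tanh (1 / Real.cosh x ^ 2) x := by
  have h : Real.tanh = fun y => Real.sinh y / Real.cosh y := by
    funext y; exact Real.tanh_eq_sinh_div_cosh y
  rw [h]
  have := (Real.hasDerivAt_sinh x).div (Real.hasDerivAt_cosh x) (Real.cosh_pos x).ne'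
  refine this.congr_deriv ?_
  field_simp
  nlinarith [Real.cosh_sq_sub_sinh_sq x]
lemma tanh_scale {t x : ℝ} (ht : 1 < t) (hx : 0 < x) :
    Real.tanh (t * x) < t * Real.tanh x := by
  set g : ℝ → ℝ := fun y => t * Real.tanh y - Real.tanh (t * y) with hg
  have hderiv : ∀ y : ℝ, HasDerivAt g (t / Real.cosh y ^ 2 - t / Real.cosh (t * y) ^ 2) y := by
    intro y
    have h1 : HasDerivAt (fun y => t * Real.tanh y) (t * (1 / Real.cosh y ^ 2)) y :=
      (hasDerivAt_tanh y).const_mul t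
    have hm : HasDerivAt (fun z : ℝ => t * z) t y := by
      simpa using (hasDerivAt_id y).const_mul t
    have h2 : HasDerivAt (fun y => Real.tanh (t * y)) (1 / Real.cosh (t * y) ^ 2 * t) y :=
      (hasDerivAt_tanh (t * y)).comp y hm
    exact (h1.sub h2).congr_deriv (by ring)
  have hcont : Continuous Real.tanh := by
    have h : Real.tanh = fun y => Real.sinh y / Real.cosh y := by
      funext y; exact Real.tanh_eq_sinh_div_cosh y
    rw [h]
    exact Real.continuous_sinh.div Real.continuous_cosh fun y => (Real.cosh_pos y).ne'
  have hmono : StrictMonoOn g (Ici 0) := by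
    apply strictMonoOn_of_deriv_pos (convex_Ici 0)
    · exact ((continuous_const.mul hcont).sub (hcont.comp (continuous_const.mul continuous_id))).continuousOn
    · intro y hy
      rw [interior_Ici] at hy
      rw [mem_Ioi] at hy
      rw [(hderiv y).deriv]
      have hyt : y < t * y := by nlinarith
      have hc : Real.cosh y < Real.cosh (t * y) :=
        Real.cosh_strictMonoOn (mem_Ici.mpr (le_of_lt hy)) (mem_Ici.mpr (by positivity)) hyt
      have hc1 : (0:ℝ) < Real.cosh y := Real.cosh_pos y
      have : t / Real.cosh (t * y) ^ 2 < t / Real.cosh y ^ 2 := by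
        apply div_lt_div_of_pos_left (by linarith) (by positivity)
        nlinarith
      linarith
  have := hmono (mem_Ici.mpr (le_refl 0)) (mem_Ici.mpr (le_of_lt hx)) hx
  simp [hg] at this
  linarith

lemma fix_lt_absurd {J ρ ρ' : ℝ} (hJ : 0 < J) (hρ : 0 < ρ) (hfix : ρ = Real.tanh (J * ρ / 2))
    (hfix' : ρ' = Real.tanh (J * ρ' / 2)) (hlt : ρ < ρ') : False := by
  have ht : 1 < ρ' / ρ := (one_lt_div hρ).mpr hlt
  have hx : 0 < J * ρ / 2 := by positivity
  have := tanh_scale ht hx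
  have heq : ρ' / ρ * (J * ρ / 2) = J * ρ' / 2 := by field_simp
  rw [heq, ← hfix, ← hfix'] at this
  have : ρ' < ρ' := by
    calc ρ' < ρ' / ρ * ρ := this
    _ = ρ' := by field_simp
  exact lt_irrefl _ this

/-- For `0 < J ≤ 2` the only solution `ρ ≥ 0` of
`ρ = tanh(Jρ/2)` is `ρ = 0`; for `J > 2` there is a unique positive solution,
it lies in `(0,1)`, and it is increasing as a function of `J` on `(2, ∞)`. -/
theorem stmt_11 :
    (∀ J : ℝ, 0 < J → J ≤ 2 →
      ∀ ρ : ℝ, 0 ≤ ρ → ρ = Real.tanh (J * ρ / 2) → ρ = 0) ∧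
    (∀ J : ℝ, 2 < J →
      ∃! ρ : ℝ, 0 < ρ ∧ ρ < 1 ∧ ρ = Real.tanh (J * ρ / 2)) ∧
    (∀ J₁ J₂ ρ₁ ρ₂ : ℝ, 2 < J₁ → J₁ < J₂ →
      0 < ρ₁ → ρ₁ = Real.tanh (J₁ * ρ₁ / 2) →
      0 < ρ₂ → ρ₂ = Real.tanh (J₂ * ρ₂ / 2) →
      ρ₁ < ρ₂) := by
  have hcont : Continuous Real.tanh := by
    have h : Real.tanh = fun y => Real.sinh y / Real.cosh y := by
      funext y; exact Real.tanh_eq_sinh_div_cosh y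
    rw [h]
    exact Real.continuous_sinh.div Real.continuous_cosh fun y => (Real.cosh_pos y).ne'
  refine ⟨?_, ?_, ?_⟩
  · -- subcritical
    intro J hJ hJ2 ρ hρ hfix
    by_contra hne
    have hρpos : 0 < ρ := lt_of_le_of_ne hρ (Ne.symm hne)
    have h1 : J * ρ / 2 ≤ ρ := by nlinarith
    have h2 : Real.tanh (J * ρ / 2) ≤ Real.tanh ρ := tanh_strictMono.monotone h1
    have h3 : Real.tanh ρ < ρ := tanh_lt_self hρpos
    linarith [hfix ▸ (h2.trans_lt h3)]
  · -- supercritical: existence and uniqueness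
    intro J hJ
    set f : ℝ → ℝ := fun ρ => Real.tanh (J * ρ / 2) - ρ with hf
    have hfc : Continuous f := by
      exact (hcont.comp (by continuity)).sub continuous_id
    -- derivative of f at 0 is J/2 - 1 > 0
    have hd : HasDerivAt f (J / 2 - 1) 0 := by
      have hm : HasDerivAt (fun ρ : ℝ => J * ρ / 2) (J / 2) 0 := by
        simpa using ((hasDerivAt_id (0:ℝ)).const_mul J).div_const 2
      have h1 : HasDerivAt (fun ρ => Real.tanh (J * ρ / 2))
          (1 / Real.cosh (J * 0 / 2) ^ 2 * (J / 2)) 0 :=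
        by have := (_root_.hasDerivAt_tanh (J * 0 / 2)).comp 0 hm; exact this
      have h2 := h1.sub (hasDerivAt_id (0:ℝ))
      refine h2.congr_deriv ?_
      simp [Real.cosh_zero]
    -- find x₀ ∈ (0,1) with f x₀ > 0
    have hslope := hasDerivAt_iff_tendsto_slope.mp hd
    have hpos : ∀ᶠ x in nhdsWithin (0:ℝ) (Set.Ioi 0), 0 < slope f 0 x := by
      have : ∀ᶠ x in nhdsWithin (0:ℝ) {(0:ℝ)}ᶜ, 0 < slope f 0 x :=
        hslope.eventually (eventually_gt_nhds (by linarith))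
      exact this.filter_mono (nhdsWithin_mono 0 (fun x hx => ne_of_gt hx))
    have hlt1 : ∀ᶠ x in nhdsWithin (0:ℝ) (Set.Ioi 0), x ∈ Set.Ioo (0:ℝ) 1 := by
      have : Set.Ioo (0:ℝ) 1 ∈ nhdsWithin (0:ℝ) (Set.Ioi 0) :=
        Ioo_mem_nhdsGT_of_mem ⟨le_refl 0, zero_lt_one⟩
      exact this
    obtain ⟨x₀, hx₀s, hx₀m⟩ := (hpos.and hlt1).exists
    have hx₀pos : 0 < x₀ := hx₀m.1
    have hfx₀ : 0 < f x₀ := by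
      have : slope f 0 x₀ = f x₀ / x₀ := by
        simp [slope, hf, Real.tanh_zero]
        rw [inv_mul_eq_div]
      rw [this] at hx₀s
      have := mul_pos hx₀s hx₀pos
      rwa [div_mul_cancel₀ _ (ne_of_gt hx₀pos)] at this
    have hf1 : f 1 < 0 := by
      have := _root_.tanh_lt_one (J * 1 / 2)
      simp only [hf]; linarith
    -- IVT
    have hsub : (0:ℝ) ∈ Set.Icc (f 1) (f x₀) := ⟨le_of_lt hf1, le_of_lt hfx₀⟩
    obtain ⟨ρ, hρmem, hρeq⟩ := intermediate_value_Icc' (le_of_lt hx₀m.2) hfc.continuousOn hsub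
    have hρpos : 0 < ρ := lt_of_lt_of_le hx₀pos hρmem.1
    have hρne1 : ρ ≠ 1 := fun h => by rw [h] at hρeq; linarith
    have hρlt1 : ρ < 1 := lt_of_le_of_ne hρmem.2 hρne1
    have hρfix : ρ = Real.tanh (J * ρ / 2) := by
      simp only [hf] at hρeq; linarith
    refine ⟨ρ, ⟨hρpos, hρlt1, hρfix⟩, ?_⟩
    rintro ρ' ⟨hρ'pos, hρ'lt1, hρ'fix⟩
    rcases lt_trichotomy ρ' ρ with h | h | h
    · exact absurd (fix_lt_absurd (by linarith) hρ'pos hρ'fix hρfix h) not_false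
    · exact h
    · exact absurd (fix_lt_absurd (by linarith) hρpos hρfix hρ'fix h) not_false
  · -- monotonicity in J
    intro J₁ J₂ ρ₁ ρ₂ hJ₁ hJ hρ₁ hfix₁ hρ₂ hfix₂
    by_contra hle
    push_neg at hle
    have hmono : Real.tanh (J₁ * ρ₂ / 2) < Real.tanh (J₂ * ρ₂ / 2) := by
      apply tanh_strictMono; nlinarith
    rcases eq_or_lt_of_le hle with heq | hlt
    · rw [← heq] at hfix₁
      linarith
    · -- ρ₂ < ρ₁
      have ht : 1 < ρ₁ / ρ₂ := (one_lt_div hρ₂).mpr hlt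
      have hx : 0 < J₁ * ρ₂ / 2 := by positivity
      have hscale := tanh_scale ht hx
      have heq2 : ρ₁ / ρ₂ * (J₁ * ρ₂ / 2) = J₁ * ρ₁ / 2 := by field_simp
      rw [heq2, ← hfix₁] at hscale
      have h2 : ρ₁ / ρ₂ * Real.tanh (J₁ * ρ₂ / 2) < ρ₁ / ρ₂ * ρ₂ := by
        apply mul_lt_mul_of_pos_left _ (by positivity)
        calc Real.tanh (J₁ * ρ₂ / 2) < Real.tanh (J₂ * ρ₂ / 2) := hmono
        _ = ρ₂ := hfix₂.symm
      rw [div_mul_cancel₀ _ (ne_of_gt hρ₂)] at h2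
      linarith
end

section
/- Let Φ_J^{(q)}(x₁,…,x_q) = Σ_{k=1}^q ( −(J/2) x_k² + x_k log x_k ) on the probability simplex. If (x₁,…,x_q) is a local minimum of Φ_J^{(q)} on the simplex, then (x₁,…,x_q) is a permutation of a vector (x₁⋆,…,x_q⋆) with x₁⋆ ≥ x₂⋆ = ⋯ = x_q⋆. Moreover, if x₁⋆ > x₂⋆ then J x₁⋆ > 1 > J x₂⋆. -/
open Finset

open Filter Set Topology

noncomputable def gf (J : ℝ) (t : ℝ) : ℝ := -(J / 2) * t ^ 2 + t * Real.log t

lemma hasDerivAt_g (J : ℝ) {t : ℝ} (ht : t ≠ 0) :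
    HasDerivAt (gf J) (Real.log t + 1 - J * t) t := by
  have h1 : HasDerivAt (fun s : ℝ => -(J / 2) * s ^ 2) (-(J / 2) * (2 * t ^ 1)) t := by
    simpa using (hasDerivAt_pow 2 t).const_mul (-(J / 2))
  have h2 := Real.hasDerivAt_mul_log ht
  refine (h1.fun_add h2).congr_deriv ?_
  ring

lemma h_strictMonoOn {J : ℝ} (hJ : 0 < J) :
    StrictMonoOn (fun t : ℝ => Real.log t - J * t) (Set.Ioc 0 J⁻¹) := by
  have hder : ∀ t ∈ interior (Set.Ioc (0:ℝ) J⁻¹),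
      0 < deriv (fun t : ℝ => Real.log t - J * t) t := by
    intro t ht
    rw [interior_Ioc] at ht
    have ht0 : 0 < t := ht.1
    have hd : HasDerivAt (fun t : ℝ => Real.log t - J * t) (t⁻¹ - J) t := by
      simpa using (Real.hasDerivAt_log ht0.ne').fun_sub ((hasDerivAt_id t).const_mul J)
    rw [hd.deriv]
    have h1 : J * t < 1 := by
      have := mul_lt_mul_of_pos_left ht.2 hJ
      rwa [mul_inv_cancel₀ hJ.ne'] at this
    have h2 : t * t⁻¹ = 1 := mul_inv_cancel₀ ht0.ne'
    nlinarith
  apply strictMonoOn_of_deriv_pos (convex_Ioc _ _) _ hder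
  intro t ht
  exact ((Real.continuousAt_log ht.1.ne').sub
    (continuous_const.mul continuous_id).continuousAt).continuousWithinAt

lemma h_strictAntiOn {J : ℝ} (hJ : 0 < J) :
    StrictAntiOn (fun t : ℝ => Real.log t - J * t) (Set.Ici J⁻¹) := by
  have hJi : 0 < J⁻¹ := inv_pos.mpr hJ
  have hder : ∀ t ∈ interior (Set.Ici (J:ℝ)⁻¹),
      deriv (fun t : ℝ => Real.log t - J * t) t < 0 := by
    intro t ht
    rw [interior_Ici] at ht
    have ht0 : 0 < t := hJi.trans ht
    have hd : HasDerivAt (fun t : ℝ => Real.log t - J * t) (t⁻¹ - J) t := by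
      simpa using (Real.hasDerivAt_log ht0.ne').fun_sub ((hasDerivAt_id t).const_mul J)
    rw [hd.deriv]
    have h1 : 1 < J * t := by
      have := mul_lt_mul_of_pos_left ht hJ
      rwa [mul_inv_cancel₀ hJ.ne'] at this
    have h2 : t * t⁻¹ = 1 := mul_inv_cancel₀ ht0.ne'
    nlinarith
  apply strictAntiOn_of_deriv_neg (convex_Ici _) _ hder
  intro t ht
  have ht0 : 0 < t := lt_of_lt_of_le hJi ht
  exact ((Real.continuousAt_log ht0.ne').sub
    (continuous_const.mul continuous_id).continuousAt).continuousWithinAt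

lemma dichot {J a b : ℝ} (hJ : 0 ≤ J) (ha : 0 < a) (hab : a < b)
    (he : Real.log a - J * a = Real.log b - J * b) : J * a < 1 ∧ 1 < J * b := by
  have hb : 0 < b := ha.trans hab
  rcases hJ.eq_or_lt with hJ0 | hJ0
  · exfalso
    have hlog : Real.log a = Real.log b := by rw [← hJ0] at he; simpa using he
    have : a = b := by rw [← Real.exp_log ha, ← Real.exp_log hb, hlog]
    exact absurd this hab.ne
  · have hJi : J * J⁻¹ = 1 := mul_inv_cancel₀ hJ0.ne'
    constructor
    · by_contra hc
      push_neg at hc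
      have haI : J⁻¹ ≤ a := by nlinarith
      have := h_strictAntiOn hJ0 haI (haI.trans hab.le) hab
      simp only at this
      linarith
    · by_contra hc
      push_neg at hc
      have hbI : b ≤ J⁻¹ := by nlinarith
      have := h_strictMonoOn hJ0 ⟨ha, hab.le.trans hbI⟩ ⟨hb, hbI⟩ hab
      simp only at this
      linarith

lemma stepA (J m : ℝ) (hm : 0 < m) :
    Tendsto (fun t : ℝ => (gf J t + (gf J (m - t) - gf J m)) / t) (𝓝[>] (0:ℝ)) atBot := by
  have hF : HasDerivAt (fun t : ℝ => gf J (m - t)) ((Real.log m + 1 - J * m) * (-1)) 0 := by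
    have hinner : HasDerivAt (fun t : ℝ => m - t) (-1) 0 := by
      simpa using (hasDerivAt_const (0:ℝ) m).fun_sub (hasDerivAt_id 0)
    have houter : HasDerivAt (gf J) (Real.log m + 1 - J * m) ((fun t : ℝ => m - t) 0) := by
      simpa using hasDerivAt_g J hm.ne'
    exact houter.comp 0 hinner
  have hslope : Tendsto (fun t : ℝ => (gf J (m - t) - gf J m) / t) (𝓝[>] (0:ℝ))
      (𝓝 ((Real.log m + 1 - J * m) * (-1))) := by
    have h1 := hasDerivAt_iff_tendsto_slope.mp hF
    have h2 := h1.mono_left (nhdsWithin_mono _ fun t ht => ne_of_gt ht)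
    refine h2.congr fun t => ?_
    simp [slope_def_field]
  have hlog : Tendsto (fun t : ℝ => Real.log t + (-(J / 2) * t)) (𝓝[>] (0:ℝ)) atBot := by
    apply Real.tendsto_log_nhdsGT_zero.atBot_add
    have h : Tendsto (fun t : ℝ => -(J / 2) * t) (𝓝 0) (𝓝 (-(J / 2) * 0)) :=
      (continuous_const.mul continuous_id).tendsto 0
    rw [mul_zero] at h
    exact h.mono_left nhdsWithin_le_nhds
  have := hlog.atBot_add hslope
  refine this.congr' ?_
  filter_upwards [self_mem_nhdsWithin] with t ht
  have ht0 : (t : ℝ) ≠ 0 := ne_of_gt ht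
  simp only [gf]
  field_simp
  ring

lemma stepB {J a b : ℝ} (ha : 0 < a) (hb : 0 < b)
    (hloc : IsLocalMin (fun t : ℝ => gf J (a + t) + gf J (b - t)) 0) :
    Real.log a - J * a = Real.log b - J * b := by
  have hi1 : HasDerivAt (fun t : ℝ => a + t) 1 0 := by
    simpa using (hasDerivAt_const (0:ℝ) a).fun_add (hasDerivAt_id 0)
  have hi2 : HasDerivAt (fun t : ℝ => b - t) (-1) 0 := by
    simpa using (hasDerivAt_const (0:ℝ) b).fun_sub (hasDerivAt_id 0)
  have ho1 : HasDerivAt (gf J) (Real.log a + 1 - J * a) ((fun t : ℝ => a + t) 0) := by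
    simpa using hasDerivAt_g J ha.ne'
  have ho2 : HasDerivAt (gf J) (Real.log b + 1 - J * b) ((fun t : ℝ => b - t) 0) := by
    simpa using hasDerivAt_g J hb.ne'
  have hsum : HasDerivAt (fun t : ℝ => gf J (a + t) + gf J (b - t))
      ((Real.log a + 1 - J * a) * 1 + (Real.log b + 1 - J * b) * (-1)) 0 :=
    (ho1.comp 0 hi1).add (ho2.comp 0 hi2)
  have h0 := hloc.deriv_eq_zero
  rw [hsum.deriv] at h0
  linarith

lemma stepC {J a : ℝ} (hJ : 0 < J) (ha : J⁻¹ < a)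
    (hloc : IsLocalMin (fun t : ℝ => gf J (a + t) + gf J (a - t)) 0) : False := by
  have hJi : 0 < J⁻¹ := inv_pos.mpr hJ
  have ha0 : 0 < a := hJi.trans ha
  set ε : ℝ := (a - J⁻¹) / 2 with hε
  have hεpos : 0 < ε := by simp only [hε]; linarith
  set φ : ℝ → ℝ := fun t => gf J (a + t) + gf J (a - t) with hφ
  have hder : ∀ t : ℝ, a + t ≠ 0 → a - t ≠ 0 →
      HasDerivAt φ ((Real.log (a + t) + 1 - J * (a + t)) * 1 +
        (Real.log (a - t) + 1 - J * (a - t)) * (-1)) t := by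
    intro t h1 h2
    have hi1 : HasDerivAt (fun s : ℝ => a + s) 1 t := by
      simpa using (hasDerivAt_const t a).fun_add (hasDerivAt_id t)
    have hi2 : HasDerivAt (fun s : ℝ => a - s) (-1) t := by
      simpa using (hasDerivAt_const t a).fun_sub (hasDerivAt_id t)
    have ho1 : HasDerivAt (gf J) (Real.log (a + t) + 1 - J * (a + t)) ((fun s : ℝ => a + s) t) := by
      simpa using hasDerivAt_g J h1
    have ho2 : HasDerivAt (gf J) (Real.log (a - t) + 1 - J * (a - t)) ((fun s : ℝ => a - s) t) := by
      simpa using hasDerivAt_g J h2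
    exact (ho1.comp t hi1).add (ho2.comp t hi2)
  have hbnd : ∀ t : ℝ, t ∈ Icc 0 ε → (a + t ≠ 0 ∧ a - t ≠ 0) := by
    intro t ht
    constructor
    · have : 0 < a + t := by linarith [ht.1]
      exact this.ne'
    · have : 0 < a - t := by
        have := ht.2
        simp only [hε] at this
        linarith
      exact this.ne'
  have hanti : StrictAntiOn φ (Icc 0 ε) := by
    apply strictAntiOn_of_deriv_neg (convex_Icc _ _)
    · intro t ht
      obtain ⟨h1, h2⟩ := hbnd t ht
      exact (hder t h1 h2).continuousAt.continuousWithinAt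
    · intro t ht
      rw [interior_Icc] at ht
      obtain ⟨h1, h2⟩ := hbnd t ⟨ht.1.le, ht.2.le⟩
      rw [(hder t h1 h2).deriv]
      have hm1 : a - t ∈ Set.Ici J⁻¹ := by
        simp only [Set.mem_Ici]
        have := ht.2
        simp only [hε] at this
        linarith
      have hm2 : a + t ∈ Set.Ici J⁻¹ := by
        simp only [Set.mem_Ici]
        linarith [ht.1, hm1]
      have hlt : a - t < a + t := by linarith [ht.1]
      have := h_strictAntiOn hJ hm1 hm2 hlt
      simp only at this
      linarith
  have hevent : ∀ᶠ t in 𝓝[>] (0:ℝ), φ t < φ 0 := by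
    filter_upwards [Ioo_mem_nhdsGT hεpos] with t ht
    exact hanti ⟨le_rfl, hεpos.le⟩ ⟨ht.1.le, ht.2.le⟩ ht.1
  have hge : ∀ᶠ t in 𝓝[>] (0:ℝ), φ 0 ≤ φ t := hloc.filter_mono nhdsWithin_le_nhds
  obtain ⟨t, h1, h2⟩ := (hevent.and hge).exists
  linarith

/-- Structure of local minima of the `q`-state Potts mean-field
free energy `Φ_J^{(q)}(x) = Σ_k (−(J/2)x_k² + x_k log x_k)` on the probability
simplex: every local minimum is a permutation of a vector
`(x₁⋆, …, x_q⋆)` with `x₁⋆ ≥ x₂⋆ = ⋯ = x_q⋆`; moreover, if `x₁⋆ > x₂⋆`, then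
`J x₁⋆ > 1 > J x₂⋆`. -/
theorem stmt_12
    (q : ℕ) (hq : 3 ≤ q) (J : ℝ) (hJ : 0 ≤ J)
    (Δ : Set (Fin q → ℝ))
    (hΔ : Δ = {x : Fin q → ℝ | (∀ k, 0 ≤ x k) ∧ ∑ k, x k = 1})
    (Φ : (Fin q → ℝ) → ℝ)
    (hΦ : ∀ x : Fin q → ℝ,
      Φ x = ∑ k, (-(J / 2) * (x k) ^ 2 + x k * Real.log (x k)))
    (x : Fin q → ℝ) (hx : x ∈ Δ)
    (hmin : IsLocalMinOn Φ Δ x) :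
    ∃ (xs : Fin q → ℝ) (σ : Equiv.Perm (Fin q)),
      x = xs ∘ σ ∧
      (∀ k : Fin q, k.val ≠ 0 → xs k = xs ⟨1, by omega⟩) ∧
      xs ⟨1, by omega⟩ ≤ xs ⟨0, by omega⟩ ∧
      (xs ⟨1, by omega⟩ < xs ⟨0, by omega⟩ →
        1 < J * xs ⟨0, by omega⟩ ∧ J * xs ⟨1, by omega⟩ < 1) := by
  classical
  have hΦg : ∀ z : Fin q → ℝ, Φ z = ∑ k, gf J (z k) := hΦ
  rw [hΔ] at hx
  obtain ⟨hx0, hxsum⟩ := hx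
  have hsplit : ∀ (G : ℝ → ℝ) (i j : Fin q), i ≠ j → ∀ z : Fin q → ℝ,
      ∑ k, G (z k) = (∑ k ∈ univ \ {i, j}, G (z k)) + (G (z i) + G (z j)) := by
    intro G i j hij z
    rw [← Finset.sum_sdiff (Finset.subset_univ {i, j}), Finset.sum_pair hij]
  set y : Fin q → Fin q → ℝ → (Fin q → ℝ) :=
    fun i j t => Function.update (Function.update x i (x i + t)) j (x j - t) with hydef
  have hyi : ∀ i j t, i ≠ j → y i j t i = x i + t := by
    intro i j t hij
    simp [hydef, Function.update_of_ne hij]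
  have hyj : ∀ i j (t : ℝ), y i j t j = x j - t := by
    intro i j t
    simp [hydef]
  have hyk : ∀ i j t (k : Fin q), k ≠ i → k ≠ j → y i j t k = x k := by
    intro i j t k hki hkj
    simp [hydef, Function.update_of_ne hkj, Function.update_of_ne hki]
  have hdiff : ∀ i j t, i ≠ j →
      Φ (y i j t) - Φ x = gf J (x i + t) + gf J (x j - t) - (gf J (x i) + gf J (x j)) := by
    intro i j t hij
    rw [hΦg, hΦg, hsplit (gf J) i j hij (y i j t), hsplit (gf J) i j hij x]
    have heq : ∑ k ∈ univ \ {i, j}, gf J (y i j t k) = ∑ k ∈ univ \ {i, j}, gf J (x k) := by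
      refine Finset.sum_congr rfl fun k hk => ?_
      simp only [Finset.mem_sdiff, Finset.mem_insert, Finset.mem_singleton, not_or] at hk
      rw [hyk i j t k hk.2.1 hk.2.2]
    rw [heq, hyi i j t hij, hyj i j t]
    ring
  have hmem : ∀ i j t, i ≠ j → 0 ≤ x i + t → 0 ≤ x j - t → y i j t ∈ Δ := by
    intro i j t hij h1 h2
    rw [hΔ]
    refine ⟨fun k => ?_, ?_⟩
    · by_cases hkj : k = j
      · rw [hkj, hyj]; exact h2
      by_cases hki : k = i
      · rw [hki, hyi i j t hij]; exact h1
      · rw [hyk i j t k hki hkj]; exact hx0 k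
    · have e1 := hsplit (fun s => s) i j hij (y i j t)
      have e2 := hsplit (fun s => s) i j hij x
      rw [e1]
      have heq : ∑ k ∈ univ \ {i, j}, y i j t k = ∑ k ∈ univ \ {i, j}, x k := by
        refine Finset.sum_congr rfl fun k hk => ?_
        simp only [Finset.mem_sdiff, Finset.mem_insert, Finset.mem_singleton, not_or] at hk
        rw [hyk i j t k hk.2.1 hk.2.2]
      rw [heq, hyi i j t hij, hyj i j t]
      rw [e2] at hxsum
      linarith
  have hdist : ∀ i j (t : ℝ), i ≠ j → dist (y i j t) x ≤ |t| := by
    intro i j t hij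
    rw [dist_pi_le_iff (abs_nonneg t)]
    intro k
    by_cases hkj : k = j
    · rw [hkj, hyj, Real.dist_eq]
      rw [show x j - t - x j = -t by ring, abs_neg]
    by_cases hki : k = i
    · rw [hki, hyi i j t hij, Real.dist_eq]
      rw [show x i + t - x i = t by ring]
    · rw [hyk i j t k hki hkj]
      simp [abs_nonneg]
  obtain ⟨ε, hε, hball⟩ : ∃ ε > 0, Metric.ball x ε ∩ Δ ⊆ {z | Φ x ≤ Φ z} :=
    Metric.mem_nhdsWithin_iff.mp hmin
  -- Step A: positivity
  have hxpos : ∀ k, 0 < x k := by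
    intro i
    rcases (hx0 i).lt_or_eq with h | h
    · exact h
    exfalso
    obtain ⟨j, hj⟩ : ∃ j, 0 < x j := by
      by_contra hc
      push_neg at hc
      have hz : ∑ k, x k = 0 := Finset.sum_eq_zero fun k _ => le_antisymm (hc k) (hx0 k)
      rw [hz] at hxsum
      norm_num at hxsum
    have hij : i ≠ j := by
      rintro rfl
      rw [← h] at hj
      exact lt_irrefl _ hj
    have hDeq : ∀ t : ℝ, Φ (y i j t) - Φ x
        = gf J t + (gf J (x j - t) - gf J (x j)) := by
      intro t
      rw [hdiff i j t hij, ← h]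
      have hg0 : gf J 0 = 0 := by simp [gf]
      rw [zero_add, hg0]
      ring
    have htend := stepA J (x j) hj
    have hev1 : ∀ᶠ t in 𝓝[>] (0:ℝ), gf J t + (gf J (x j - t) - gf J (x j)) < 0 := by
      have hneg := htend.eventually (eventually_lt_atBot (0:ℝ))
      filter_upwards [hneg, self_mem_nhdsWithin] with t h1 h2
      have h3 := mul_neg_of_neg_of_pos h1 h2
      rwa [div_mul_cancel₀ _ (ne_of_gt h2)] at h3
    have hev2 : ∀ᶠ t in 𝓝[>] (0:ℝ), 0 ≤ gf J t + (gf J (x j - t) - gf J (x j)) := by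
      filter_upwards [Ioo_mem_nhdsGT (lt_min hε hj)] with t ht
      obtain ⟨ht0, htm⟩ := ht
      have h1 : 0 ≤ x i + t := by rw [← h]; linarith
      have h2 : 0 ≤ x j - t := by
        have := lt_of_lt_of_le htm (min_le_right _ _)
        linarith
      have hmem' := hmem i j t hij h1 h2
      have hballm : y i j t ∈ Metric.ball x ε := by
        rw [Metric.mem_ball]
        calc dist (y i j t) x ≤ |t| := hdist i j t hij
          _ = t := abs_of_pos ht0
          _ < ε := lt_of_lt_of_le htm (min_le_left _ _)
      have hle : Φ x ≤ Φ (y i j t) := hball ⟨hballm, hmem'⟩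
      have hde := hDeq t
      linarith
    obtain ⟨t, h1, h2⟩ := (hev1.and hev2).exists
    linarith
  -- local minimality along a pair direction
  have hlocmin : ∀ i j : Fin q, i ≠ j →
      IsLocalMin (fun t : ℝ => gf J (x i + t) + gf J (x j - t)) 0 := by
    intro i j hij
    have hδ : 0 < min ε (min (x i) (x j)) := lt_min hε (lt_min (hxpos i) (hxpos j))
    have hev : ∀ᶠ t : ℝ in 𝓝 0,
        gf J (x i + 0) + gf J (x j - 0) ≤ gf J (x i + t) + gf J (x j - t) := by
      filter_upwards [Metric.ball_mem_nhds (0:ℝ) hδ] with t ht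
      rw [Metric.mem_ball, Real.dist_eq, sub_zero] at ht
      obtain ⟨hta, htb⟩ := abs_lt.mp ht
      have hδi : min ε (min (x i) (x j)) ≤ x i := le_trans (min_le_right _ _) (min_le_left _ _)
      have hδj : min ε (min (x i) (x j)) ≤ x j := le_trans (min_le_right _ _) (min_le_right _ _)
      have h1 : 0 ≤ x i + t := by linarith
      have h2 : 0 ≤ x j - t := by linarith
      have hmem' := hmem i j t hij h1 h2
      have hballm : y i j t ∈ Metric.ball x ε := by
        rw [Metric.mem_ball]
        calc dist (y i j t) x ≤ |t| := hdist i j t hij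
          _ < min ε (min (x i) (x j)) := ht
          _ ≤ ε := min_le_left _ _
      have hle : Φ x ≤ Φ (y i j t) := hball ⟨hballm, hmem'⟩
      have hd := hdiff i j t hij
      rw [add_zero, sub_zero]
      linarith
    exact hev
  -- first-order condition
  have hfo : ∀ i j : Fin q, i ≠ j →
      Real.log (x i) - J * x i = Real.log (x j) - J * x j := fun i j hij =>
    stepB (hxpos i) (hxpos j) (hlocmin i j hij)
  -- second-order condition
  have hC : ∀ i j : Fin q, i ≠ j → x i = x j → J * x i ≤ 1 := by
    intro i j hij hxij
    by_contra hc
    push_neg at hc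
    have hJpos : 0 < J := by
      rcases hJ.eq_or_lt with h0 | h0
      · rw [← h0] at hc; rw [zero_mul] at hc; linarith
      · exact h0
    have haJ : J⁻¹ < x i := by
      have h1 : J * J⁻¹ = 1 := mul_inv_cancel₀ hJpos.ne'
      nlinarith [hxpos i]
    apply stepC hJpos haJ
    have hlm := hlocmin i j hij
    rwa [← hxij] at hlm
  -- structure
  haveI : Nonempty (Fin q) := ⟨⟨0, by omega⟩⟩
  obtain ⟨i0, hi0⟩ := Finite.exists_max x
  have helper : ∀ k l : Fin q, l ≠ i0 → x k < x l → False := by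
    intro k l hl hkl
    have hklne : k ≠ l := by rintro rfl; exact lt_irrefl _ hkl
    have hd := dichot hJ (hxpos k) hkl (hfo k l hklne)
    rcases (hi0 l).lt_or_eq with hcase | hcase
    · have := (dichot hJ (hxpos l) hcase (hfo l i0 hl)).1
      linarith [hd.2]
    · have := hC l i0 hl hcase
      linarith [hd.2]
  have hall : ∀ k l : Fin q, l ≠ i0 → k ≠ i0 → x k = x l := by
    intro k l hl hk
    rcases lt_trichotomy (x k) (x l) with hcase | hcase | hcase
    · exact absurd hcase fun hcc => helper k l hl hcc
    · exact hcase
    · exact absurd hcase fun hcc => helper l k hk hcc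
  have hz01 : ((⟨1, by omega⟩ : Fin q) : Fin q).val ≠ 0 := by simp
  set j1 : Fin q := if i0.val = 0 then ⟨1, by omega⟩ else ⟨0, by omega⟩ with hj1def
  have hj1 : j1 ≠ i0 := by
    rw [hj1def]
    split_ifs with hcase
    · intro hcc
      rw [← hcc] at hcase
      simp at hcase
    · intro hcc
      rw [← hcc] at hcase
      simp at hcase
  set xs : Fin q → ℝ := fun k => if k.val = 0 then x i0 else x j1 with hxsdef
  have hxsv : ∀ k : Fin q, k.val ≠ 0 → xs k = x j1 := by
    intro k hk
    simp only [hxsdef]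
    rw [if_neg hk]
  have hxs0 : ∀ k : Fin q, k.val = 0 → xs k = x i0 := by
    intro k hk
    simp only [hxsdef]
    rw [if_pos hk]
  have e1 : xs (⟨1, by omega⟩ : Fin q) = x j1 := hxsv _ (by norm_num)
  have e2 : xs (⟨0, by omega⟩ : Fin q) = x i0 := hxs0 _ rfl
  refine ⟨xs, Equiv.swap (⟨0, by omega⟩ : Fin q) i0, ?_, ?_, ?_, ?_⟩
  · funext k
    simp only [Function.comp_apply]
    by_cases hk0 : k.val = 0
    · have hkeq : k = (⟨0, by omega⟩ : Fin q) := Fin.ext hk0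
      rw [hkeq, Equiv.swap_apply_left]
      by_cases hcase : i0.val = 0
      · rw [hxs0 i0 hcase]
        exact congrArg x (Fin.ext hcase.symm)
      · rw [hxsv i0 hcase]
        refine hall _ _ hj1 fun hcc => hcase ?_
        rw [← hcc]
    · have hkne : k ≠ (⟨0, by omega⟩ : Fin q) := fun hcc => hk0 (by rw [hcc])
      by_cases hki : k = i0
      · rw [hki, Equiv.swap_apply_right, hxs0 _ rfl]
      · rw [Equiv.swap_apply_of_ne_of_ne hkne hki, hxsv k hk0]
        exact hall _ _ hj1 hki
  · intro k hk
    exact (hxsv k hk).trans (hxsv _ (by norm_num)).symm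
  · exact le_of_le_of_eq (le_of_eq_of_le e1 (hi0 j1)) e2.symm
  · intro hlt
    have hlt' : x j1 < x i0 := by
      calc x j1 = xs (⟨1, by omega⟩ : Fin q) := e1.symm
        _ < xs (⟨0, by omega⟩ : Fin q) := hlt
        _ = x i0 := e2
    have hd := dichot hJ (hxpos j1) hlt' (hfo j1 i0 hj1)
    constructor
    · show 1 < J * xs (⟨0, by omega⟩ : Fin q)
      rw [e2]; exact hd.2
    · show J * xs (⟨1, by omega⟩ : Fin q) < 1
      rw [e1]; exact hd.1
end

section
/- For the q-state Potts mean-field free energy Φ_J^{(q)}(x₁,…,x_q) = Σ_k ( −(J/2)x_k² + x_k log x_k ) on the probability simplex, and any two indices j ≠ k, if J(x_j + x_k) ≤ 2 at a local minimum then x_j = x_k. -/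
open Finset Topology Filter

/-- Key inequality: `log τ > 2(τ-1)/(τ+1)` for `τ > 1`. -/
lemma key_log_aux (τ : ℝ) (hτ : 1 < τ) : 2 * (τ - 1) / (τ + 1) < Real.log τ := by
  set ψ : ℝ → ℝ := fun t => Real.log t + 4 / (t + 1) with hψ
  have hmono : StrictMonoOn ψ (Set.Ici 1) := by
    apply strictMonoOn_of_deriv_pos (convex_Ici 1)
    · apply ContinuousOn.add
      · exact Real.continuousOn_log.mono (by intro t ht; simp at ht ⊢; linarith)
      · apply ContinuousOn.div continuousOn_const (by fun_prop)
        intro t ht; simp at ht; intro h; linarith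
    · intro t ht
      rw [interior_Ici] at ht
      simp only [Set.mem_Ioi] at ht
      have ht0 : t ≠ 0 := by linarith
      have ht1 : t + 1 ≠ 0 := by linarith
      have hd : HasDerivAt ψ (1 / t + 4 * (-((t + 1) ^ 2)⁻¹ * 1)) t := by
        have h1 : HasDerivAt Real.log (1 / t) t := by
          simpa [one_div] using Real.hasDerivAt_log ht0
        have h2 : HasDerivAt (fun s : ℝ => s + 1) 1 t := by
          simpa using (hasDerivAt_id t).add_const 1
        have h3 : HasDerivAt (fun s : ℝ => (s + 1)⁻¹) (-((t + 1) ^ 2)⁻¹ * 1) t := by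
          exact (hasDerivAt_inv ht1).comp t h2
        have h4 : HasDerivAt (fun s : ℝ => Real.log s + 4 * (s + 1)⁻¹)
            (1 / t + 4 * (-((t + 1) ^ 2)⁻¹ * 1)) t := h1.add (h3.const_mul 4)
        simpa [hψ, div_eq_mul_inv] using h4
      rw [hd.deriv]
      rw [show (1 / t + 4 * (-((t + 1) ^ 2)⁻¹ * 1)) = ((t - 1) ^ 2) / (t * (t + 1) ^ 2) by
        field_simp; ring]
      have ht1' : 0 < t - 1 := by linarith
      apply div_pos (by positivity) (by positivity)
  have h1 : ψ 1 < ψ τ := hmono (by simp) (by simp; linarith) hτ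
  have hψ1 : ψ 1 = 2 := by norm_num [hψ]
  have hτ1 : τ + 1 ≠ 0 := by linarith
  have heq : 2 * (τ - 1) / (τ + 1) = 2 - 4 / (τ + 1) := by field_simp; ring
  rw [heq]
  have hfin : (2:ℝ) < Real.log τ + 4 / (τ + 1) := by
    have h2 : ψ τ = Real.log τ + 4 / (τ + 1) := rfl
    rw [hψ1, h2] at h1
    exact h1
  linarith

/-- Key inequality: `log A - log B > 2(A-B)/(A+B)` for `0 < B < A`. -/
lemma key_log (A B : ℝ) (hB : 0 < B) (hBA : B < A) :
    2 * (A - B) / (A + B) < Real.log A - Real.log B := by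
  have hA : 0 < A := lt_trans hB hBA
  have h := key_log_aux (A / B) ((one_lt_div hB).mpr hBA)
  rw [Real.log_div hA.ne' hB.ne'] at h
  have heq : 2 * (A / B - 1) / (A / B + 1) = 2 * (A - B) / (A + B) := by
    rw [div_eq_div_iff (by positivity) (by positivity)]
    field_simp
  linarith [heq ▸ h]

/-- Auxiliary: at a local minimum, we cannot have `x k < x j` with `J(x_j+x_k) ≤ 2`. -/
lemma stmt_13_aux
    (q : ℕ) (J : ℝ) (hJ : 0 ≤ J)
    (Δ : Set (Fin q → ℝ))
    (hΔ : Δ = {x : Fin q → ℝ | (∀ k, 0 ≤ x k) ∧ ∑ k, x k = 1})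
    (Φ : (Fin q → ℝ) → ℝ)
    (hΦ : ∀ x : Fin q → ℝ,
      Φ x = ∑ k, (-(J / 2) * (x k) ^ 2 + x k * Real.log (x k)))
    (x : Fin q → ℝ) (hx : x ∈ Δ)
    (hmin : IsLocalMinOn Φ Δ x)
    (j k : Fin q) (hjk : j ≠ k) (hJy : J * (x j + x k) ≤ 2)
    (hlt : x k < x j) : False := by
  rw [hΔ] at hx
  obtain ⟨hx0, hx1⟩ := hx
  set a := x j with ha
  set b := x k with hb
  have hb0 : 0 ≤ b := hx0 k
  have ha0 : 0 < a := lt_of_le_of_lt hb0 hlt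
  have hy : 0 < a + b := by linarith
  set ε : ℝ := (a - b) / 2 with hε
  have hε0 : 0 < ε := by simp [hε]; linarith
  have hεa : ε < a := by simp [hε]; linarith
  set G : ℝ → ℝ := fun u => -(J / 2) * u ^ 2 + u * Real.log u with hG
  set v : ℝ → Fin q → ℝ :=
    fun t i => if i = j then x j - t else if i = k then x k + t else x i with hv
  have hv0 : v 0 = x := by
    funext i
    simp only [hv]
    split_ifs with h1 h2
    · subst h1; ring
    · subst h2; ring
    · rfl
  -- membership in the simplex
  have hvΔ : ∀ t ∈ Set.Ioc (0:ℝ) ε, v t ∈ Δ := by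
    intro t ht
    rw [hΔ]
    constructor
    · intro i
      simp only [hv]
      split_ifs with h1 h2
      · have := ht.2; simp only [← ha]; linarith
      · have := ht.1; simp only [← hb]; linarith
      · exact hx0 i
    · have hterm : ∀ i : Fin q, v t i =
          x i + ((if i = j then -t else 0) + (if i = k then t else 0)) := by
        intro i
        simp only [hv]
        by_cases h1 : i = j
        · subst h1
          rw [if_pos rfl, if_pos rfl, if_neg hjk]
          ring
        · by_cases h2 : i = k
          · subst h2
            rw [if_neg h1, if_pos rfl, if_neg h1, if_pos rfl]
            ring
          · rw [if_neg h1, if_neg h2, if_neg h1, if_neg h2]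
            ring
      calc ∑ i, v t i
          = ∑ i, (x i + ((if i = j then -t else 0) + (if i = k then t else 0))) :=
            Finset.sum_congr rfl (fun i _ => hterm i)
        _ = (∑ i, x i) + ((∑ i, if i = j then -t else 0) + (∑ i, if i = k then t else 0)) := by
            rw [Finset.sum_add_distrib, Finset.sum_add_distrib]
        _ = 1 := by
            rw [hx1, Finset.sum_ite_eq' univ j (fun _ => -t),
              Finset.sum_ite_eq' univ k (fun _ => t)]
            simp
  -- value of Φ along the path
  have hΦv : ∀ t : ℝ, Φ (v t) = Φ x + (G (a - t) + G (b + t)) - (G a + G b) := by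
    intro t
    have hterm : ∀ i : Fin q, G (v t i) =
        G (x i) + ((if i = j then G (a - t) - G a else 0)
          + (if i = k then G (b + t) - G b else 0)) := by
      intro i
      simp only [hv]
      by_cases h1 : i = j
      · subst h1; simp [hjk, ← ha]
      · by_cases h2 : i = k
        · subst h2; simp [h1, ← hb]
        · simp [h1, h2]
    have h1 : Φ (v t) = ∑ i, G (v t i) := hΦ (v t)
    have h2 : Φ x = ∑ i, G (x i) := hΦ x
    rw [h1, h2]
    calc ∑ i, G (v t i)
        = ∑ i, (G (x i) + ((if i = j then G (a - t) - G a else 0)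
            + (if i = k then G (b + t) - G b else 0))) :=
          Finset.sum_congr rfl (fun i _ => hterm i)
      _ = (∑ i, G (x i)) + ((∑ i, if i = j then G (a - t) - G a else 0)
            + (∑ i, if i = k then G (b + t) - G b else 0)) := by
          simp only [Finset.sum_add_distrib]
          try ring
      _ = (∑ i, G (x i)) + (G (a - t) + G (b + t)) - (G a + G b) := by
          rw [Finset.sum_ite_eq' univ j, Finset.sum_ite_eq' univ k]
          simp; ring
  -- the one-dimensional energy
  set H : ℝ → ℝ := fun t => G (a - t) + G (b + t) with hH
  have hGcont : Continuous G := by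
    apply Continuous.add (by fun_prop) Real.continuous_mul_log
  have hGderiv : ∀ u : ℝ, u ≠ 0 → HasDerivAt G (-(J * u) + (Real.log u + 1)) u := by
    intro u hu
    have h1 : HasDerivAt (fun s : ℝ => -(J / 2) * s ^ 2) (-(J / 2) * (2 * u ^ 1)) u := by
      simpa using (hasDerivAt_pow 2 u).const_mul (-(J / 2))
    have h2 := Real.hasDerivAt_mul_log hu
    have : HasDerivAt (fun s : ℝ => -(J / 2) * s ^ 2 + s * Real.log s)
        (-(J / 2) * (2 * u ^ 1) + (Real.log u + 1)) u := h1.add h2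
    convert this using 1
    ring
  have hanti : StrictAntiOn H (Set.Icc 0 ε) := by
    apply strictAntiOn_of_deriv_neg (convex_Icc 0 ε)
    · exact (hGcont.comp (by fun_prop)).add (hGcont.comp (by fun_prop)) |>.continuousOn
    · intro t ht
      rw [interior_Icc] at ht
      obtain ⟨ht0, htε⟩ := ht
      set A : ℝ := a - t with hA
      set B : ℝ := b + t with hB
      have hA0 : 0 < A := by simp [hA]; linarith
      have hB0 : 0 < B := by simp [hB]; linarith
      have hBA : B < A := by simp [hA, hB, hε] at *; linarith
      have hdA : HasDerivAt (fun s : ℝ => G (a - s))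
          ((-(J * A) + (Real.log A + 1)) * (-1)) t := by
        have hin : HasDerivAt (fun s : ℝ => a - s) (-1) t := by
          simpa using (hasDerivAt_id t).const_sub a
        exact (hGderiv A hA0.ne').comp t hin
      have hdB : HasDerivAt (fun s : ℝ => G (b + s))
          ((-(J * B) + (Real.log B + 1)) * 1) t := by
        have hin : HasDerivAt (fun s : ℝ => b + s) 1 t := by
          simpa using (hasDerivAt_id t).const_add b
        exact (hGderiv B hB0.ne').comp t hin
      have hdH : HasDerivAt H
          ((-(J * A) + (Real.log A + 1)) * (-1) + (-(J * B) + (Real.log B + 1)) * 1) t :=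
        hdA.add hdB
      rw [hdH.deriv]
      -- show the derivative is negative
      have hkey := key_log A B hB0 hBA
      have hAB : A + B = a + b := by rw [hA, hB]; ring
      rw [hAB] at hkey
      have hJ2 : J ≤ 2 / (a + b) := (le_div_iff₀ hy).mpr (by linarith)
      have h3 : J * (A - B) ≤ (2 / (a + b)) * (A - B) :=
        mul_le_mul_of_nonneg_right hJ2 (by linarith)
      have h4 : (2 / (a + b)) * (A - B) = 2 * (A - B) / (a + b) := by ring
      nlinarith [hkey, h3, h4]
  have hHlt : ∀ t ∈ Set.Ioc (0:ℝ) ε, H t < H 0 := by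
    intro t ht
    exact hanti (Set.left_mem_Icc.mpr hε0.le) ⟨ht.1.le, ht.2⟩ ht.1
  have hΦlt : ∀ t ∈ Set.Ioc (0:ℝ) ε, Φ (v t) < Φ x := by
    intro t ht
    have h1 := hΦv t
    have h2 := hΦv 0
    rw [hv0] at h2
    have hH0 : H 0 = G a + G b := by simp [hH]
    have hHt : H t = G (a - t) + G (b + t) := rfl
    have := hHlt t ht
    linarith
  -- contradiction with local minimality
  have hne : (𝓝[>] (0:ℝ)).NeBot := nhdsGT_neBot 0
  have hmem : ∀ᶠ t in 𝓝[>] (0:ℝ), t ∈ Set.Ioc 0 ε :=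
    Ioc_mem_nhdsGT_of_mem ⟨le_refl 0, hε0⟩
  have hcontv : Continuous v := by
    apply continuous_pi
    intro i
    simp only [hv]
    split_ifs <;> fun_prop
  have htend : Filter.Tendsto v (𝓝[>] (0:ℝ)) (𝓝[Δ] x) := by
    rw [tendsto_nhdsWithin_iff]
    constructor
    · have := hcontv.tendsto 0
      rw [hv0] at this
      exact this.mono_left nhdsWithin_le_nhds
    · exact hmem.mono (fun t ht => hvΔ t ht)
  have hev : ∀ᶠ t in 𝓝[>] (0:ℝ), Φ x ≤ Φ (v t) := htend.eventually hmin
  have hev2 : ∀ᶠ t in 𝓝[>] (0:ℝ), Φ (v t) < Φ x :=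
    hmem.mono (fun t ht => hΦlt t ht)
  obtain ⟨t, h1, h2⟩ := (hev.and hev2).exists
  linarith

/-- At a local minimum of the `q`-state Potts mean-field free
energy on the probability simplex, any two components `x_j`, `x_k` (`j ≠ k`)
with `J(x_j + x_k) ≤ 2` must be equal. -/
theorem stmt_13
    (q : ℕ) (hq : 3 ≤ q) (J : ℝ) (hJ : 0 ≤ J)
    (Δ : Set (Fin q → ℝ))
    (hΔ : Δ = {x : Fin q → ℝ | (∀ k, 0 ≤ x k) ∧ ∑ k, x k = 1})
    (Φ : (Fin q → ℝ) → ℝ)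
    (hΦ : ∀ x : Fin q → ℝ,
      Φ x = ∑ k, (-(J / 2) * (x k) ^ 2 + x k * Real.log (x k)))
    (x : Fin q → ℝ) (hx : x ∈ Δ)
    (hmin : IsLocalMinOn Φ Δ x) :
    ∀ j k : Fin q, j ≠ k → J * (x j + x k) ≤ 2 → x j = x k := by
  intro j k hjk hJy
  by_contra hne
  rcases lt_or_gt_of_ne hne with h | h
  · exact stmt_13_aux q J hJ Δ hΔ Φ hΦ x hx hmin k j hjk.symm
      (by linarith [hJy]) h
  · exact stmt_13_aux q J hJ Δ hΔ Φ hΦ x hx hmin j k hjk hJy h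
end

section
/- For h > 0 and N → ∞, the probability measures ρ_{h,N}(dx) = (1−x²)^{(N−3)/2} e^{hNx²} dx / ∫₀¹ (1−x²)^{(N−3)/2} e^{hNx²} dx on [0,1] converge weakly to the Dirac point mass at x_h, where x_h² = max{0, 1 − 1/(2h)}. -/
open Real Filter Topology

private lemma aux_one_sub_mul_exp_lt_one {s : ℝ} (hs : s ≠ 0) : (1 - s) * Real.exp s < 1 := by
  rcases le_or_gt (1 - s) 0 with h | h
  · have := Real.exp_pos s
    nlinarith
  · have h1 : 1 - s < Real.exp (-s) := by
      have := Real.add_one_lt_exp (x := -s) (by simpa using hs)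
      linarith
    calc (1 - s) * Real.exp s < Real.exp (-s) * Real.exp s :=
          mul_lt_mul_of_pos_right h1 (Real.exp_pos s)
      _ = 1 := by rw [← Real.exp_add]; simp

private lemma aux_g_strict_max {h t : ℝ} (hh : 0 < h) (ht0 : 0 ≤ t) (ht1 : t ≤ 1)
    (hne : t ≠ max 0 (1 - 1/(2*h))) :
    (1 - t) * Real.exp (2*h*t) <
      (1 - max 0 (1 - 1/(2*h))) * Real.exp (2*h*max 0 (1 - 1/(2*h))) := by
  rcases le_or_gt (1 - 1/(2*h)) 0 with hc | hc
  · rw [max_eq_left hc] at hne ⊢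
    simp only [mul_zero, Real.exp_zero, sub_zero, mul_one]
    have h2h : 2*h ≤ 1 := by
      have : (1:ℝ) ≤ 1/(2*h) := by linarith
      rw [le_div_iff₀ (by linarith)] at this
      linarith
    have ht : 0 < t := lt_of_le_of_ne ht0 (Ne.symm hne)
    calc (1 - t) * Real.exp (2*h*t) ≤ (1 - t) * Real.exp t := by
          apply mul_le_mul_of_nonneg_left _ (by linarith)
          exact Real.exp_le_exp.2 (by nlinarith)
      _ < 1 := aux_one_sub_mul_exp_lt_one ht.ne'
  · rw [max_eq_right hc.le] at hne ⊢
    set tstar := 1 - 1/(2*h) with htstar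
    set s := 2*h*(t - tstar) with hsdef
    have h2h : (0:ℝ) < 2*h := by linarith
    have hsne : s ≠ 0 := by
      simp only [hsdef]
      intro hcon
      rcases mul_eq_zero.mp hcon with h' | h'
      · linarith
      · exact hne (by linarith)
    have key := aux_one_sub_mul_exp_lt_one hsne
    have e1 : Real.exp (2*h*t) = Real.exp (2*h*tstar) * Real.exp s := by
      rw [← Real.exp_add]; congr 1; simp only [hsdef]; ring
    have e2 : 1 - t = (1 - s)/(2*h) := by
      field_simp [hsdef, htstar]
      rw [hsdef, htstar, mul_sub, mul_sub, mul_one_div_cancel h2h.ne']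
      ring
    have e3 : 1 - tstar = 1/(2*h) := by simp [htstar]
    rw [e1, e2, e3]
    have hE : 0 < Real.exp (2*h*tstar) := Real.exp_pos _
    calc (1-s)/(2*h) * (Real.exp (2*h*tstar) * Real.exp s)
        = ((1-s) * Real.exp s) * (Real.exp (2*h*tstar)/(2*h)) := by ring
      _ < 1 * (Real.exp (2*h*tstar)/(2*h)) := by
          apply mul_lt_mul_of_pos_right key (by positivity)
      _ = 1/(2*h) * Real.exp (2*h*tstar) := by ring

private lemma aux_psi_sqrt (h x : ℝ) :
    Real.sqrt (1 - x^2) * Real.exp (h*x^2) = Real.sqrt ((1 - x^2) * Real.exp (2*h*x^2)) := by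
  have e : Real.exp (2*h*x^2) = Real.exp (h*x^2) * Real.exp (h*x^2) := by
    rw [← Real.exp_add]; congr 1; ring
  rw [e, Real.sqrt_mul' _ (mul_nonneg (Real.exp_nonneg _) (Real.exp_nonneg _)),
    Real.sqrt_mul_self (Real.exp_nonneg _)]

private lemma aux_xh_sq_lt_one {h xh : ℝ} (hh : 0 < h) (hxh : xh^2 = max 0 (1 - 1/(2*h))) :
    xh^2 < 1 := by
  rw [hxh]
  apply max_lt one_pos
  have : 0 < 1/(2*h) := by positivity
  linarith

private lemma aux_psi_lt {h xh x : ℝ} (hh : 0 < h) (hxh0 : 0 ≤ xh)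
    (hxh : xh^2 = max 0 (1 - 1/(2*h))) (hx0 : 0 ≤ x) (hx1 : x ≤ 1) (hne : x ≠ xh) :
    Real.sqrt (1 - x^2) * Real.exp (h*x^2) < Real.sqrt (1 - xh^2) * Real.exp (h*xh^2) := by
  have hx2 : x^2 ≤ 1 := by nlinarith
  have htne : x^2 ≠ max 0 (1 - 1/(2*h)) := by
    rw [← hxh]
    intro hcon
    apply hne
    have hfac : (x - xh) * (x + xh) = 0 := by nlinarith
    rcases mul_eq_zero.mp hfac with h' | h'
    · linarith
    · have : x = 0 := by linarith
      have : xh = 0 := by linarith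
      linarith
  have hg := aux_g_strict_max hh (sq_nonneg x) hx2 htne
  rw [← hxh] at hg
  rw [aux_psi_sqrt, aux_psi_sqrt]
  apply Real.sqrt_lt_sqrt _ hg
  exact mul_nonneg (by nlinarith) (Real.exp_nonneg _)

set_option maxHeartbeats 1000000 in
private lemma aux_main_nat (h xh : ℝ) (hh : 0 < h) (hxh0 : 0 ≤ xh)
    (hxh : xh^2 = max 0 (1 - 1/(2*h)))
    (f : ℝ → ℝ) (hf_cont : Continuous f) (C : ℝ) (hC : ∀ x, |f x| ≤ C) :
    Tendsto (fun k : ℕ =>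
      (∫ x in (0:ℝ)..1,
          f x * ((Real.sqrt (1-x^2) * Real.exp (h*x^2))^k * Real.exp (3*h*x^2))) /
      (∫ x in (0:ℝ)..1,
          (Real.sqrt (1-x^2) * Real.exp (h*x^2))^k * Real.exp (3*h*x^2)))
      atTop (𝓝 (f xh)) := by
  set ψ : ℝ → ℝ := fun x => Real.sqrt (1-x^2) * Real.exp (h*x^2) with hψ
  set e : ℝ → ℝ := fun x => Real.exp (3*h*x^2) with he
  have hψc : Continuous ψ := by
    apply Continuous.mul
    · exact Real.continuous_sqrt.comp (by continuity)
    · exact Real.continuous_exp.comp (by continuity)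
  have hec : Continuous e := Real.continuous_exp.comp (by continuity)
  have hψnn : ∀ x, 0 ≤ ψ x := fun x => mul_nonneg (Real.sqrt_nonneg _) (Real.exp_nonneg _)
  have henn : ∀ x, 1 ≤ e x := fun x => Real.one_le_exp (by positivity)
  have hxh2 : xh^2 < 1 := aux_xh_sq_lt_one hh hxh
  have hxh1 : xh < 1 := by nlinarith
  have hm : 0 < ψ xh := by
    apply mul_pos _ (Real.exp_pos _)
    exact Real.sqrt_pos.2 (by nlinarith)
  set m := ψ xh with hmdef
  have hC0 : 0 ≤ C := (abs_nonneg _).trans (hC 0)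
  -- integrability
  have hw : ∀ k : ℕ, Continuous (fun x => ψ x ^ k * e x) :=
    fun k => (hψc.pow k).mul hec
  have hfw : ∀ k : ℕ, Continuous (fun x => f x * (ψ x ^ k * e x)) :=
    fun k => hf_cont.mul (hw k)
  rw [Metric.tendsto_atTop]
  intro ε hε
  -- choose δ from continuity of f
  obtain ⟨δ, hδ, hfδ⟩ := Metric.continuousAt_iff.mp hf_cont.continuousAt (ε/2) (by linarith)
  -- sup of ψ away from xh
  obtain ⟨s, hs0, hsm, hsK⟩ : ∃ s, 0 ≤ s ∧ s < m ∧
      ∀ x, x ∈ Set.Icc (0:ℝ) 1 → δ ≤ |x - xh| → ψ x ≤ s := by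
    set K := Set.Icc (0:ℝ) 1 ∩ {x | δ ≤ |x - xh|} with hK
    by_cases hKn : K.Nonempty
    · have hKc : IsCompact K := by
        apply isCompact_Icc.inter_right
        exact isClosed_le continuous_const (continuous_abs.comp (continuous_id.sub continuous_const))
      obtain ⟨x0, hx0K, hmax⟩ := hKc.exists_isMaxOn hKn hψc.continuousOn
      refine ⟨ψ x0, hψnn x0, ?_, fun x hx hxd => hmax ⟨hx, hxd⟩⟩
      have hx0ne : x0 ≠ xh := by
        intro hcon
        have := hx0K.2
        rw [hcon] at this
        simp at this
        linarith
      exact aux_psi_lt hh hxh0 hxh hx0K.1.1 hx0K.1.2 hx0ne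
    · exact ⟨0, le_refl 0, hm, fun x hx hxd => absurd ⟨hx, hxd⟩ (fun hmem => hKn ⟨x, hmem⟩)⟩
  set m' := (s + m)/2 with hm'def
  have hsm' : s < m' := by simp only [hm'def]; linarith
  have hm'm : m' < m := by simp only [hm'def]; linarith
  have hm'0 : 0 < m' := by simp only [hm'def]; linarith
  -- interval where ψ ≥ m'
  obtain ⟨η, hη, hψη⟩ := Metric.continuousAt_iff.mp hψc.continuousAt (m - m') (by linarith)
  set b := min (xh + η/2) ((xh+1)/2) with hbdef
  have hab : xh < b := lt_min (by linarith) (by linarith)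
  have hb1 : b ≤ 1 := le_trans (min_le_right _ _) (by linarith)
  have hψI : ∀ x ∈ Set.Icc xh b, m' ≤ ψ x := by
    intro x hx
    have h1 : dist x xh < η := by
      rw [Real.dist_eq, abs_of_nonneg (by linarith [hx.1])]
      have : x ≤ xh + η/2 := le_trans hx.2 (min_le_left _ _)
      linarith
    have := hψη h1
    rw [Real.dist_eq, abs_lt] at this
    linarith [this.1]
  set ℓ := b - xh with hℓdef
  have hℓ : 0 < ℓ := by simp only [hℓdef]; linarith
  -- lower bound on the denominator
  have hBlow : ∀ k : ℕ, ℓ * m'^k ≤ ∫ x in (0:ℝ)..1, ψ x ^ k * e x := by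
    intro k
    have h1 : ℓ * m'^k = ∫ _x in xh..b, m'^k := by
      rw [intervalIntegral.integral_const, smul_eq_mul, hℓdef]
    rw [h1]
    calc (∫ _x in xh..b, m'^k)
        ≤ ∫ x in xh..b, ψ x ^ k * e x := by
          apply intervalIntegral.integral_mono_on hab.le
            (intervalIntegrable_const) ((hw k).intervalIntegrable _ _)
          intro x hx
          calc m'^k = m'^k * 1 := (mul_one _).symm
            _ ≤ ψ x ^ k * e x := by
                apply mul_le_mul (pow_le_pow_left₀ hm'0.le (hψI x hx) k) (henn x)
                  one_pos.le (pow_nonneg (hψnn x) k)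
      _ ≤ ∫ x in (0:ℝ)..1, ψ x ^ k * e x := by
          apply intervalIntegral.integral_mono_interval (by linarith [hxh0] : (0:ℝ) ≤ xh)
            hab.le hb1 ?_ ((hw k).intervalIntegrable _ _)
          filter_upwards with x
          exact mul_nonneg (pow_nonneg (hψnn x) k) (by linarith [henn x])
  have hB : ∀ k : ℕ, 0 < ∫ x in (0:ℝ)..1, ψ x ^ k * e x :=
    fun k => lt_of_lt_of_le (by positivity) (hBlow k)
  set D := 2*C*Real.exp (3*h) with hDdef
  have hD0 : 0 ≤ D := by positivity
  -- pointwise bound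
  have hpt : ∀ k : ℕ, ∀ x ∈ Set.Icc (0:ℝ) 1,
      |f x - f xh| * (ψ x ^ k * e x) ≤ ε/2 * (ψ x ^ k * e x) + D * s^k := by
    intro k x hx
    have hwnn : 0 ≤ ψ x ^ k * e x :=
      mul_nonneg (pow_nonneg (hψnn x) k) (by linarith [henn x])
    by_cases hxd : dist x xh < δ
    · have h1 : |f x - f xh| ≤ ε/2 := by
        have := hfδ hxd
        rw [Real.dist_eq] at this
        linarith
      have h2 : |f x - f xh| * (ψ x ^ k * e x) ≤ ε/2 * (ψ x ^ k * e x) :=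
        mul_le_mul_of_nonneg_right h1 hwnn
      have : (0:ℝ) ≤ D * s^k := by positivity
      linarith
    · push_neg at hxd
      rw [Real.dist_eq] at hxd
      have h1 : ψ x ≤ s := hsK x hx hxd
      have h2 : ψ x ^ k * e x ≤ s^k * Real.exp (3*h) := by
        apply mul_le_mul (pow_le_pow_left₀ (hψnn x) h1 k) _ (by linarith [henn x])
          (pow_nonneg hs0 k)
        apply Real.exp_le_exp.2
        obtain ⟨hxa, hxb⟩ := hx
        have hx2 : x^2 ≤ 1 := by nlinarith
        nlinarith
      have h3 : |f x - f xh| ≤ 2*C := by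
        calc |f x - f xh| ≤ |f x| + |f xh| := abs_sub _ _
          _ ≤ 2*C := by linarith [hC x, hC xh]
      have h4 : |f x - f xh| * (ψ x ^ k * e x) ≤ 2*C * (s^k * Real.exp (3*h)) :=
        mul_le_mul h3 h2 hwnn (by linarith)
      have h5 : (0:ℝ) ≤ ε/2 * (ψ x ^ k * e x) := by positivity
      have : 2*C * (s^k * Real.exp (3*h)) = D * s^k := by rw [hDdef]; ring
      linarith
  -- numerator bound
  have hnum : ∀ k : ℕ,
      |(∫ x in (0:ℝ)..1, f x * (ψ x ^ k * e x)) -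
        f xh * ∫ x in (0:ℝ)..1, ψ x ^ k * e x| ≤
      ε/2 * (∫ x in (0:ℝ)..1, ψ x ^ k * e x) + D * s^k := by
    intro k
    have e1 : (∫ x in (0:ℝ)..1, f x * (ψ x ^ k * e x)) -
        f xh * (∫ x in (0:ℝ)..1, ψ x ^ k * e x) =
        ∫ x in (0:ℝ)..1, (f x - f xh) * (ψ x ^ k * e x) := by
      rw [← intervalIntegral.integral_const_mul,
        ← intervalIntegral.integral_sub (g := fun x => f xh * (ψ x ^ k * e x))
          ((hfw k).intervalIntegrable _ _)
          ((continuous_const.mul (hw k)).intervalIntegrable _ _)]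
      congr 1
      ext x
      ring
    rw [e1]
    calc |∫ x in (0:ℝ)..1, (f x - f xh) * (ψ x ^ k * e x)|
        ≤ ∫ x in (0:ℝ)..1, |(f x - f xh) * (ψ x ^ k * e x)| :=
          intervalIntegral.abs_integral_le_integral_abs zero_le_one
      _ ≤ ∫ x in (0:ℝ)..1, (ε/2 * (ψ x ^ k * e x) + D * s^k) := by
          apply intervalIntegral.integral_mono_on zero_le_one
            (((hf_cont.sub continuous_const).mul (hw k)).abs.intervalIntegrable _ _)
            (((continuous_const.mul (hw k)).add continuous_const).intervalIntegrable _ _)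
          intro x hx
          show |(f x - f xh) * (ψ x ^ k * e x)| ≤ ε/2 * (ψ x ^ k * e x) + D * s^k
          rw [abs_mul, abs_of_nonneg (mul_nonneg (pow_nonneg (hψnn x) k) (by linarith [henn x]))]
          exact hpt k x hx
      _ = ε/2 * (∫ x in (0:ℝ)..1, ψ x ^ k * e x) + D * s^k := by
          rw [intervalIntegral.integral_add (f := fun x => ε/2 * (ψ x ^ k * e x))
              ((continuous_const.mul (hw k)).intervalIntegrable _ _)
            (intervalIntegrable_const), intervalIntegral.integral_const_mul,
            intervalIntegral.integral_const]
          simp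
  -- geometric decay
  have hgeo : Tendsto (fun k : ℕ => (D/ℓ) * (s/m')^k) atTop (𝓝 0) := by
    rw [show (0:ℝ) = (D/ℓ) * 0 by ring]
    exact (tendsto_pow_atTop_nhds_zero_of_lt_one (div_nonneg hs0 hm'0.le)
      ((div_lt_one hm'0).2 hsm')).const_mul _
  obtain ⟨Nk, hNk⟩ := Filter.eventually_atTop.mp (hgeo.eventually_lt_const (by linarith : (0:ℝ) < ε/2))
  refine ⟨Nk, fun k hk => ?_⟩
  set A := ∫ x in (0:ℝ)..1, f x * (ψ x ^ k * e x) with hA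
  set B := ∫ x in (0:ℝ)..1, ψ x ^ k * e x with hBd
  have hBpos := hB k
  rw [Real.dist_eq]
  have e2 : A / B - f xh = (A - f xh * B)/B := by
    have hBne : B ≠ 0 := hBpos.ne'
    rw [sub_div, mul_div_assoc, div_self hBne, mul_one]
  rw [e2, abs_div, abs_of_pos hBpos]
  have h1 : |A - f xh * B| ≤ ε/2 * B + D * s^k := hnum k
  have h2 : D * s^k / B ≤ (D/ℓ) * (s/m')^k := by
    have hlow : ℓ * m'^k ≤ B := hBlow k
    have : D * s^k / B ≤ D * s^k / (ℓ * m'^k) := by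
      apply div_le_div_of_nonneg_left (by positivity) (by positivity) hlow
    have e3 : ∀ (d l mm ss : ℝ), d * ss^k/(l*mm^k) = (d/l)*(ss/mm)^k := by
      intro d l mm ss
      rw [div_pow, div_mul_div_comm]
    calc D * s^k / B ≤ D * s^k / (ℓ * m'^k) := this
      _ = (D/ℓ) * (s/m')^k := e3 D ℓ m' s
  calc |A - f xh * B| / B ≤ (ε/2 * B + D * s^k)/B :=
        div_le_div_of_nonneg_right h1 hBpos.le -- check name
    _ = ε/2 + D * s^k / B := by
        rw [add_div, mul_div_assoc, div_self hBpos.ne', mul_one]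
    _ < ε/2 + ε/2 := by
        have := hNk k hk
        have h3 : D * s^k / B < ε/2 := lt_of_le_of_lt h2 this
        linarith
    _ = ε := by ring

private lemma aux_integrand_eq (h : ℝ) (N : ℕ) (hN : 3 ≤ N) {x : ℝ}
    (hx0 : 0 ≤ x) (hx1 : x ≤ 1) :
    (1 - x ^ 2) ^ (((N : ℝ) - 3) / 2) * Real.exp (h * N * x ^ 2) =
      (Real.sqrt (1-x^2) * Real.exp (h*x^2))^(N-3) * Real.exp (3*h*x^2) := by
  have ha : (0:ℝ) ≤ 1 - x^2 := by nlinarith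
  have hk : ((N:ℝ) - 3) = ((N - 3 : ℕ) : ℝ) := by
    push_cast [Nat.cast_sub hN]
    ring
  have hN3 : (N:ℝ) = ((N - 3 : ℕ) : ℝ) + 3 := by
    push_cast [Nat.cast_sub hN]
    ring
  set k := N - 3 with hkdef
  have e1 : (1 - x^2) ^ (((N : ℝ) - 3)/2) = Real.sqrt (1-x^2) ^ k := by
    rw [hk, show ((k:ℝ)/2) = (1/2) * (k:ℝ) by ring, Real.rpow_mul ha,
      ← Real.sqrt_eq_rpow, Real.rpow_natCast]
  have e2 : Real.exp (h*(N:ℝ)*x^2) = Real.exp (h*x^2)^k * Real.exp (3*h*x^2) := by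
    rw [show h*(N:ℝ)*x^2 = (k:ℝ)*(h*x^2) + 3*(h*x^2) by rw [hN3]; ring,
      Real.exp_add, Real.exp_nat_mul]
    ring_nf
  rw [e1, e2, mul_pow]
  ring

/-- For `h > 0`, the probability measures
`ρ_{h,N}(dx) ∝ (1−x²)^{(N−3)/2} e^{hNx²} dx` on `[0,1]` converge weakly, as
`N → ∞`, to the Dirac point mass at `x_h`, where
`x_h² = max{0, 1 − 1/(2h)}`; i.e. for every bounded continuous `f`,
`∫ f dρ_{h,N} → f(x_h)`. -/
theorem stmt_18
    (h : ℝ) (hh : 0 < h)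
    (xh : ℝ) (hxh : 0 ≤ xh ∧ xh ^ 2 = max 0 (1 - 1 / (2 * h)))
    (f : ℝ → ℝ) (hf_cont : Continuous f)
    (hf_bdd : ∃ C : ℝ, ∀ x : ℝ, |f x| ≤ C) :
    Tendsto
      (fun N : ℕ =>
        (∫ x in (0:ℝ)..1,
            f x * ((1 - x ^ 2) ^ (((N : ℝ) - 3) / 2) *
              Real.exp (h * N * x ^ 2))) /
          (∫ x in (0:ℝ)..1,
            (1 - x ^ 2) ^ (((N : ℝ) - 3) / 2) * Real.exp (h * N * x ^ 2)))
      atTop (nhds (f xh)) := by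
  obtain ⟨C, hC⟩ := hf_bdd
  have hxh2 : xh^2 = max 0 (1 - 1/(2*h)) := hxh.2
  have hmain := aux_main_nat h xh hh hxh.1 hxh2 f hf_cont C hC
  have hcomp := hmain.comp (tendsto_sub_atTop_nat 3)
  apply Tendsto.congr' _ hcomp
  filter_upwards [eventually_ge_atTop 3] with N hN
  simp only [Function.comp_apply]
  congr 1
  · apply intervalIntegral.integral_congr
    intro x hx
    rw [Set.uIcc_of_le zero_le_one] at hx
    show f x * _ = f x * _
    rw [aux_integrand_eq h N hN hx.1 hx.2]
  · apply intervalIntegral.integral_congr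
    intro x hx
    rw [Set.uIcc_of_le zero_le_one] at hx
    simp only []
    exact (aux_integrand_eq h N hN hx.1 hx.2).symm
end
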